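/- arXiv:hep-th/9505091 — 5 statements merged into one kernel-verified Lean document; each statement's English description precedes it below -/
import Mathlib

section
/- The trigonometric Calogero–Moser r-matrix satisfies the generalized classical Yang–Baxter equation: for all λ_1, λ_2, λ_3 ∈ ℂ with λ_a−λ_b ∉ iπℤ (a≠b) and all x ∈ ℂ^N with x_{ij} ∉ iπℤ (i≠j), setting r_{ab} = r(λ_a,λ_b,x) placed in factors (a,b) of (ℂ^N)^{⊗3}, one has [r_{12},r_{13}] + [r_{12},r_{23}] + [r_{13},r_{23}] − Σ_{ν=1}^N (e_{νν}⊗Id⊗Id)·∂_{x_ν} r_{23} + Σ_{ν=1}^N (Id⊗e_{νν}⊗Id)·∂_{x_ν} r_{13} − Σ_{ν=1}^N (Id⊗Id⊗e_{νν})·∂_{x_ν} r_{12} = 0. -/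
/- STATEMENT 1: The trigonometric Calogero–Moser r-matrix satisfies the
   generalized classical Yang–Baxter equation
   [r12,r13]+[r12,r23]+[r13,r23] − Σ_ν e_{νν}^{(1)} ∂_{x_ν} r23
   + Σ_ν e_{νν}^{(2)} ∂_{x_ν} r13 − Σ_ν e_{νν}^{(3)} ∂_{x_ν} r12 = 0. -/

noncomputable section
open Matrix Complex
open scoped Kronecker BigOperators

def coth (z : ℂ) : ℂ := Complex.cosh z / Complex.sinh z

def inPiZ (z : ℂ) : Prop := ∃ n : ℤ, z = (n : ℂ) * (Real.pi : ℂ) * Complex.I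

variable (N : ℕ)

def E (i j : Fin N) : Matrix (Fin N) (Fin N) ℂ := Matrix.single i j 1

def flipP : Matrix (Fin N × Fin N) (Fin N × Fin N) ℂ :=
  ∑ i : Fin N, ∑ j : Fin N, E N i j ⊗ₖ E N j i

/-- trigonometric Calogero–Moser r-matrix -/
def rCM (lam mu : ℂ) (x : Fin N → ℂ) : Matrix (Fin N × Fin N) (Fin N × Fin N) ℂ :=
  coth (lam - mu) • flipP N -
    ∑ i : Fin N, ∑ j : Fin N,
      if i ≠ j then coth (x i - x j) • (E N i j ⊗ₖ E N j i) else 0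

/-- a matrix on ℂ^N ⊗ ℂ^N placed in factors 1,2 of (ℂ^N)^{⊗3} -/
def pl12 (A : Matrix (Fin N × Fin N) (Fin N × Fin N) ℂ) :
    Matrix (Fin N × Fin N × Fin N) (Fin N × Fin N × Fin N) ℂ :=
  fun p q => A (p.1, p.2.1) (q.1, q.2.1) * (if p.2.2 = q.2.2 then 1 else 0)

/-- a matrix on ℂ^N ⊗ ℂ^N placed in factors 1,3 of (ℂ^N)^{⊗3} -/
def pl13 (A : Matrix (Fin N × Fin N) (Fin N × Fin N) ℂ) :
    Matrix (Fin N × Fin N × Fin N) (Fin N × Fin N × Fin N) ℂ :=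
  fun p q => A (p.1, p.2.2) (q.1, q.2.2) * (if p.2.1 = q.2.1 then 1 else 0)

/-- a matrix on ℂ^N ⊗ ℂ^N placed in factors 2,3 of (ℂ^N)^{⊗3} -/
def pl23 (A : Matrix (Fin N × Fin N) (Fin N × Fin N) ℂ) :
    Matrix (Fin N × Fin N × Fin N) (Fin N × Fin N × Fin N) ℂ :=
  fun p q => A (p.2.1, p.2.2) (q.2.1, q.2.2) * (if p.1 = q.1 then 1 else 0)

/-- an N×N matrix placed in factor a ∈ {1,2,3} of (ℂ^N)^{⊗3} -/
def pl1 (h : Matrix (Fin N) (Fin N) ℂ) :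
    Matrix (Fin N × Fin N × Fin N) (Fin N × Fin N × Fin N) ℂ :=
  fun p q => h p.1 q.1 * (if p.2.1 = q.2.1 then 1 else 0) * (if p.2.2 = q.2.2 then 1 else 0)

def pl2 (h : Matrix (Fin N) (Fin N) ℂ) :
    Matrix (Fin N × Fin N × Fin N) (Fin N × Fin N × Fin N) ℂ :=
  fun p q => h p.2.1 q.2.1 * (if p.1 = q.1 then 1 else 0) * (if p.2.2 = q.2.2 then 1 else 0)

def pl3 (h : Matrix (Fin N) (Fin N) ℂ) :
    Matrix (Fin N × Fin N × Fin N) (Fin N × Fin N × Fin N) ℂ :=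
  fun p q => h p.2.2 q.2.2 * (if p.1 = q.1 then 1 else 0) * (if p.2.1 = q.2.1 then 1 else 0)

/-- entrywise partial derivative ∂_{x_ν} of a matrix-valued function of x ∈ ℂ^N -/
def pderivMat {α : Type} (ν : Fin N)
    (f : (Fin N → ℂ) → Matrix α α ℂ) (x : Fin N → ℂ) : Matrix α α ℂ :=
  fun p q => deriv (fun t : ℂ => f (Function.update x ν t) p q) (x ν)

/-- matrix commutator -/
def mcomm {α : Type} [Fintype α] [DecidableEq α] (A B : Matrix α α ℂ) : Matrix α α ℂ :=
  A * B - B * A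

/-!
Every term is a weighted permutation matrix: `r(λ, μ, x)` is the flip of the two factors
weighted by `coth (λ - μ) - X i j`, where `X i j = coth (x i - x j)` off the diagonal and `0` on
it, and such matrices multiply by composing their permutations. The addition formula
`coth u * coth v + 1 = coth (u + v) * (coth u + coth v)` for the spectral parameters collapses
the three commutators to `σ - σ⁻¹`, `σ` the cyclic shift of the three factors, weighted by
`T a b c = 1 + X a b * X b c + X b c * X c a + X c a * X a b`. The same formula for the
positions makes `T` vanish when `a, b, c` are distinct; when two indices coincide `T` becomes
`1 - X i j ^ 2 = coth' (x i - x j)`, which is exactly what the derivative terms contribute.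
-/

lemma sinh_ne_zero_of_not_inPiZ {z : ℂ} (h : ¬ inPiZ z) : Complex.sinh z ≠ 0 := by
  intro h0
  apply h
  obtain ⟨k, hk⟩ := Complex.sin_eq_zero_iff.1
    (by rw [Complex.sin_mul_I, h0, zero_mul] : Complex.sin (z * Complex.I) = 0)
  refine ⟨-k, ?_⟩
  push_cast
  linear_combination (-Complex.I) * hk + z * Complex.I_sq

lemma hasDerivAt_coth {z : ℂ} (h : Complex.sinh z ≠ 0) :
    HasDerivAt coth (1 - coth z ^ 2) z := by
  refine ((Complex.hasDerivAt_cosh z).div (Complex.hasDerivAt_sinh z) h).congr_deriv ?_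
  simp only [coth]
  field_simp

lemma coth_neg (z : ℂ) : coth (-z) = -coth z := by
  rw [coth, coth, Complex.sinh_neg, Complex.cosh_neg, div_neg]

lemma coth_sub_mul_coth_sub_add_one {u v w : ℂ} (huv : Complex.sinh (u - v) ≠ 0)
    (hvw : Complex.sinh (v - w) ≠ 0) (huw : Complex.sinh (u - w) ≠ 0) :
    coth (u - v) * coth (v - w) + 1 = coth (u - w) * (coth (u - v) + coth (v - w)) := by
  rw [show u - w = (u - v) + (v - w) by ring, Complex.sinh_add] at huw
  rw [show u - w = (u - v) + (v - w) by ring, coth, coth, coth, Complex.sinh_add,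
    Complex.cosh_add]
  field_simp
  ring

section WeightedPerm

variable {α : Type*} [Fintype α] [DecidableEq α]

def weightedPerm (σ : α → α) (w : α → ℂ) : Matrix α α ℂ :=
  Matrix.of fun p q => if q = σ p then w p else 0

omit [Fintype α] in
@[simp]
lemma weightedPerm_apply (σ : α → α) (w : α → ℂ) (p q : α) :
    weightedPerm σ w p q = if q = σ p then w p else 0 := rfl

lemma weightedPerm_mul (σ τ : α → α) (w v : α → ℂ) :
    weightedPerm σ w * weightedPerm τ v = weightedPerm (τ ∘ σ) fun p => w p * v (σ p) := by
  ext p q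
  simp only [Matrix.mul_apply, weightedPerm_apply, ite_mul, zero_mul]
  simp [Finset.sum_ite_eq', mul_ite]

lemma sum_diagonal_indicator_mul {β : Type*} [Fintype β] [DecidableEq β] (π : α → β)
    (X : β → Matrix α α ℂ) (p q : α) :
    (∑ ν, diagonal (fun r => if π r = ν then (1 : ℂ) else 0) * X ν) p q = X (π p) p q := by
  simp [Matrix.sum_apply, diagonal_mul]

end WeightedPerm

section ThreePoint

variable {ι : Type*}

def threePoint (X : ι → ι → ℂ) (a b c : ι) : ℂ :=
  1 + X a b * X b c + X b c * X c a + X c a * X a b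

lemma threePoint_rotate (X : ι → ι → ℂ) (a b c : ι) :
    threePoint X a b c = threePoint X b c a := by
  unfold threePoint
  ring

lemma threePoint_self_left {X : ι → ι → ℂ} (hself : ∀ i, X i i = 0)
    (hX : ∀ i j, X j i = -X i j) (a c : ι) : threePoint X a a c = 1 - X a c ^ 2 := by
  rw [threePoint, hself, hX a c]
  ring

def threePointMat [Fintype ι] [DecidableEq ι] (X : ι → ι → ℂ) : Matrix (ι × ι × ι) (ι × ι × ι) ℂ :=
  weightedPerm (fun p => (p.2.2, p.1, p.2.1)) (fun p => threePoint X p.1 p.2.1 p.2.2) -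
    weightedPerm (fun p => (p.2.1, p.2.2, p.1)) (fun p => threePoint X p.1 p.2.1 p.2.2)

end ThreePoint

section CothDiff

variable {ι : Type*} [DecidableEq ι]

def cothDiff (x : ι → ℂ) (i j : ι) : ℂ := if i ≠ j then coth (x i - x j) else 0

lemma cothDiff_self (x : ι → ℂ) (i : ι) : cothDiff x i i = 0 := by simp [cothDiff]

lemma cothDiff_swap (x : ι → ℂ) (i j : ι) : cothDiff x j i = -cothDiff x i j := by
  by_cases h : i = j
  · simp [h, cothDiff]
  · rw [cothDiff, cothDiff, if_pos (Ne.symm h), if_pos h, ← coth_neg, neg_sub]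

lemma threePoint_cothDiff {x : ι → ℂ} (hx : ∀ i j, i ≠ j → Complex.sinh (x i - x j) ≠ 0)
    {a b c : ι} (hab : a ≠ b) (hbc : b ≠ c) (hca : c ≠ a) : threePoint (cothDiff x) a b c = 0 := by
  have h := coth_sub_mul_coth_sub_add_one (hx a b hab) (hx b c hbc) (hx a c hca.symm)
  rw [threePoint, cothDiff_swap x a c]
  simp only [cothDiff, if_pos hab, if_pos hbc, if_pos hca.symm]
  linear_combination h

lemma hasDerivAt_cothDiff_update [Fintype ι] {x : ι → ℂ}
    (hx : ∀ i j, i ≠ j → Complex.sinh (x i - x j) ≠ 0) (ν i j : ι) :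
    HasDerivAt (fun t => cothDiff (Function.update x ν t) i j)
      (((if i = ν then 1 else 0) - if j = ν then 1 else 0) * (1 - cothDiff x i j ^ 2)) (x ν) := by
  by_cases hij : i = j
  · subst hij
    simpa [cothDiff] using hasDerivAt_const (x ν) (0 : ℂ)
  have hupd (k : ι) :
      HasDerivAt (fun t => Function.update x ν t k) (if k = ν then 1 else 0) (x ν) := by
    simpa [Pi.single_apply] using hasDerivAt_pi.1 (hasDerivAt_update x ν (x ν)) k
  have hcoth : HasDerivAt coth (1 - coth (x i - x j) ^ 2)
      (Function.update x ν (x ν) i - Function.update x ν (x ν) j) := by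
    rw [Function.update_eq_self]
    exact hasDerivAt_coth (hx i j hij)
  have h : HasDerivAt (fun t => coth (Function.update x ν t i - Function.update x ν t j))
      ((1 - coth (x i - x j) ^ 2) * ((if i = ν then 1 else 0) - if j = ν then 1 else 0)) (x ν) :=
    HasDerivAt.comp (h₂ := coth) (x ν) hcoth ((hupd i).sub (hupd j))
  simp only [cothDiff, if_pos hij]
  rwa [mul_comm] at h

end CothDiff

section RMatrix

variable {N}

def rMat (C : ℂ) (X : Fin N → Fin N → ℂ) : Matrix (Fin N × Fin N) (Fin N × Fin N) ℂ :=
  weightedPerm Prod.swap fun p => C - X p.1 p.2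

/-- `∂_{x_ν} (rMat C X)` when `∂_{x_ν} X i j = (δ_{iν} - δ_{jν}) (1 - X i j ^ 2)`,
as for `X = cothDiff x`. -/
def dMat (X : Fin N → Fin N → ℂ) (ν : Fin N) : Matrix (Fin N × Fin N) (Fin N × Fin N) ℂ :=
  weightedPerm Prod.swap fun p =>
    ((if p.2 = ν then 1 else 0) - if p.1 = ν then 1 else 0) * (1 - X p.1 p.2 ^ 2)

lemma E_kronecker_E (i j : Fin N) :
    E N i j ⊗ₖ E N j i = weightedPerm Prod.swap fun p => if p = (i, j) then 1 else 0 := by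
  ext ⟨a, b⟩ ⟨d, e⟩
  simp only [E, kroneckerMap_apply, single_apply, weightedPerm_apply, Prod.swap_prod_mk,
    Prod.ext_iff]
  split_ifs <;> grind

lemma sum_smul_E_kronecker_E (g : Fin N → Fin N → ℂ) :
    ∑ i, ∑ j, g i j • (E N i j ⊗ₖ E N j i) = weightedPerm Prod.swap fun p => g p.1 p.2 := by
  ext ⟨a, b⟩ q
  simp [E_kronecker_E, Matrix.sum_apply, Prod.ext_iff, ite_and]

lemma rCM_eq_rMat (l m : ℂ) (x : Fin N → ℂ) : rCM N l m x = rMat (coth (l - m)) (cothDiff x) := by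
  have hflip : flipP N = weightedPerm Prod.swap fun _ => 1 := by
    simpa [flipP] using sum_smul_E_kronecker_E (N := N) 1
  have hcoth : (∑ i, ∑ j, if i ≠ j then coth (x i - x j) • (E N i j ⊗ₖ E N j i) else 0) =
      weightedPerm Prod.swap fun p => cothDiff x p.1 p.2 := by
    rw [← sum_smul_E_kronecker_E]
    simp only [cothDiff, ite_smul, zero_smul]
  rw [rCM, hflip, hcoth, rMat]
  ext p q
  simp [mul_ite, ite_sub_ite]

lemma pderivMat_rCM {x : Fin N → ℂ} (hx : ∀ i j, i ≠ j → Complex.sinh (x i - x j) ≠ 0)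
    (l m : ℂ) (ν : Fin N) : pderivMat N ν (rCM N l m) x = dMat (cothDiff x) ν := by
  ext p q
  simp only [pderivMat, rCM_eq_rMat, rMat, dMat, weightedPerm_apply]
  by_cases hq : q = p.swap
  · simp only [hq, if_true]
    rw [((hasDerivAt_cothDiff_update hx ν p.1 p.2).const_sub (coth (l - m))).deriv]
    ring
  · simp only [hq, if_false, deriv_const]

end RMatrix

section Placement

variable {N}

lemma pl12_weightedPerm (σ : Fin N × Fin N → Fin N × Fin N) (w : Fin N × Fin N → ℂ) :
    pl12 N (weightedPerm σ w) = weightedPerm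
      (fun p => ((σ (p.1, p.2.1)).1, (σ (p.1, p.2.1)).2, p.2.2)) (fun p => w (p.1, p.2.1)) := by
  ext ⟨a, b, c⟩ ⟨d, e, f⟩
  simp only [pl12, weightedPerm_apply, Prod.ext_iff]
  split_ifs <;> simp_all

lemma pl13_weightedPerm (σ : Fin N × Fin N → Fin N × Fin N) (w : Fin N × Fin N → ℂ) :
    pl13 N (weightedPerm σ w) = weightedPerm
      (fun p => ((σ (p.1, p.2.2)).1, p.2.1, (σ (p.1, p.2.2)).2)) (fun p => w (p.1, p.2.2)) := by
  ext ⟨a, b, c⟩ ⟨d, e, f⟩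
  simp only [pl13, weightedPerm_apply, Prod.ext_iff]
  split_ifs <;> simp_all

lemma pl23_weightedPerm (σ : Fin N × Fin N → Fin N × Fin N) (w : Fin N × Fin N → ℂ) :
    pl23 N (weightedPerm σ w) =
      weightedPerm (fun p => (p.1, (σ p.2).1, (σ p.2).2)) (fun p => w p.2) := by
  ext ⟨a, b, c⟩ ⟨d, e, f⟩
  simp only [pl23, weightedPerm_apply, Prod.ext_iff]
  split_ifs <;> simp_all

lemma pl1_E (ν : Fin N) : pl1 N (E N ν ν) = diagonal fun p => if p.1 = ν then 1 else 0 := by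
  ext ⟨a, b, c⟩ ⟨d, e, f⟩
  simp only [pl1, E, diagonal, single_apply, of_apply, Prod.ext_iff]
  split_ifs <;> grind

lemma pl2_E (ν : Fin N) : pl2 N (E N ν ν) = diagonal fun p => if p.2.1 = ν then 1 else 0 := by
  ext ⟨a, b, c⟩ ⟨d, e, f⟩
  simp only [pl2, E, diagonal, single_apply, of_apply, Prod.ext_iff]
  split_ifs <;> grind

lemma pl3_E (ν : Fin N) : pl3 N (E N ν ν) = diagonal fun p => if p.2.2 = ν then 1 else 0 := by
  ext ⟨a, b, c⟩ ⟨d, e, f⟩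
  simp only [pl3, E, diagonal, single_apply, of_apply, Prod.ext_iff]
  split_ifs <;> grind

end Placement

section YangBaxter

variable {N}

lemma mcomm_rMat_eq_threePointMat {C₁₂ C₁₃ C₂₃ : ℂ} (hC : C₁₂ * C₂₃ + 1 = C₁₃ * (C₁₂ + C₂₃))
    {X : Fin N → Fin N → ℂ} (hX : ∀ i j, X j i = -X i j) :
    mcomm (pl12 N (rMat C₁₂ X)) (pl13 N (rMat C₁₃ X)) +
      mcomm (pl12 N (rMat C₁₂ X)) (pl23 N (rMat C₂₃ X)) +
      mcomm (pl13 N (rMat C₁₃ X)) (pl23 N (rMat C₂₃ X)) = threePointMat X := by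
  ext ⟨a, b, c⟩ q
  simp only [mcomm, rMat, threePointMat, pl12_weightedPerm, pl13_weightedPerm, pl23_weightedPerm,
    weightedPerm_mul, Matrix.add_apply, Matrix.sub_apply, weightedPerm_apply, Function.comp_apply,
    Prod.fst_swap, Prod.snd_swap, threePoint]
  rw [hX a b, hX b c, hX a c]
  split_ifs
  · ring
  · linear_combination -hC
  · linear_combination hC
  · ring

lemma sum_pl_dMat_eq_threePointMat {X : Fin N → Fin N → ℂ} (hself : ∀ i, X i i = 0)
    (hX : ∀ i j, X j i = -X i j)
    (hT : ∀ a b c, a ≠ b → b ≠ c → c ≠ a → threePoint X a b c = 0) :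
    (∑ ν, pl1 N (E N ν ν) * pl23 N (dMat X ν)) - (∑ ν, pl2 N (E N ν ν) * pl13 N (dMat X ν)) +
      (∑ ν, pl3 N (E N ν ν) * pl12 N (dMat X ν)) = threePointMat X := by
  ext ⟨a, b, c⟩ q
  simp only [dMat, threePointMat, pl12_weightedPerm, pl13_weightedPerm, pl23_weightedPerm, pl1_E,
    pl2_E, pl3_E, Matrix.add_apply, Matrix.sub_apply, sum_diagonal_indicator_mul,
    weightedPerm_apply, Prod.fst_swap, Prod.snd_swap]
  by_cases hab : a = b
  · subst b
    by_cases hca : c = a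
    · subst c
      simp
    rw [threePoint_self_left hself hX]
    simp only [hca, if_true, if_false]
    split_ifs <;> ring
  by_cases hbc : b = c
  · subst c
    rw [threePoint_rotate, threePoint_self_left hself hX, hX a b]
    simp only [hab, Ne.symm hab, if_true, if_false]
    split_ifs <;> ring
  by_cases hca : c = a
  · subst c
    rw [← threePoint_rotate, threePoint_self_left hself hX, hX a b]
    simp only [hab, Ne.symm hab, if_true, if_false]
    split_ifs <;> ring
  simp [hab, hbc, hca, Ne.symm hab, Ne.symm hbc, Ne.symm hca, hT a b c hab hbc hca]

end YangBaxter

theorem rCM_generalized_CYBE (lam₁ lam₂ lam₃ : ℂ) (x : Fin N → ℂ)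
    (h12 : ¬ inPiZ (lam₁ - lam₂)) (h13 : ¬ inPiZ (lam₁ - lam₃))
    (h23 : ¬ inPiZ (lam₂ - lam₃))
    (hx : ∀ i j : Fin N, i ≠ j → ¬ inPiZ (x i - x j)) :
    mcomm (pl12 N (rCM N lam₁ lam₂ x)) (pl13 N (rCM N lam₁ lam₃ x)) +
    mcomm (pl12 N (rCM N lam₁ lam₂ x)) (pl23 N (rCM N lam₂ lam₃ x)) +
    mcomm (pl13 N (rCM N lam₁ lam₃ x)) (pl23 N (rCM N lam₂ lam₃ x)) -
    (∑ ν : Fin N, pl1 N (E N ν ν) * pl23 N (pderivMat N ν (rCM N lam₂ lam₃) x)) +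
    (∑ ν : Fin N, pl2 N (E N ν ν) * pl13 N (pderivMat N ν (rCM N lam₁ lam₃) x)) -
    (∑ ν : Fin N, pl3 N (E N ν ν) * pl12 N (pderivMat N ν (rCM N lam₁ lam₂) x)) = 0 := by
  have hxs (i j : Fin N) (hij : i ≠ j) := sinh_ne_zero_of_not_inPiZ (hx i j hij)
  have hC := coth_sub_mul_coth_sub_add_one (sinh_ne_zero_of_not_inPiZ h12)
    (sinh_ne_zero_of_not_inPiZ h23) (sinh_ne_zero_of_not_inPiZ h13)
  simp only [pderivMat_rCM hxs, rCM_eq_rMat]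
  rw [mcomm_rMat_eq_threePointMat hC (cothDiff_swap x), ← sum_pl_dMat_eq_threePointMat
    (cothDiff_self x) (cothDiff_swap x) fun a b c => threePoint_cothDiff hxs]
  abel
end
end

section
/- Gauge freedom for the generalized classical Yang–Baxter equation: let Λ ⊆ ℂ, U ⊆ ℂ^N open, and let r(λ,μ,x) be a matrix-valued function on Λ×Λ×U with entries differentiable in x, such that (a) [h⊗Id + Id⊗h, r(λ,μ,x)] = 0 for every diagonal N×N matrix h, (b) Σ_{ν=1}^N ∂_{x_ν} r(λ,μ,x) = 0, and (c) r satisfies the generalized classical Yang–Baxter equation [r_{12},r_{13}]+[r_{12},r_{23}]+[r_{13},r_{23}] − Σ_ν (e_{νν})^{(1)} ∂_{x_ν} r_{23} + Σ_ν (e_{νν})^{(2)} ∂_{x_ν} r_{13} − Σ_ν (e_{νν})^{(3)} ∂_{x_ν} r_{12} = 0 with r_{ab} = r(λ_a,λ_b,x), for all λ_1,λ_2,λ_3 ∈ Λ and x ∈ U. Then for every function α: Λ→ℂ, the matrix r̃(λ,μ,x) := (e^{α(λ)X(x)}⊗e^{α(μ)X(x)}) · r(λ,μ,x) · (e^{−α(λ)X(x)}⊗e^{−α(μ)X(x)})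 − (α(λ)−α(μ))·C also satisfies conditions (a), (b), and the same generalized classical Yang–Baxter equation, where X(x) := diag(x_1,…,x_N) − ((x_1+…+x_N)/N)·Id and C := Σ_{i=1}^N e_{ii}⊗e_{ii} − (1/N) Id⊗Id. -/
/- STATEMENT 4: Gauge freedom for the generalized classical Yang–Baxter equation:
   if r satisfies (a) Cartan invariance, (b) Σ_ν ∂_{x_ν} r = 0, and (c) the
   generalized CYBE, then so does
   r̃(λ,μ,x) = (e^{α(λ)X}⊗e^{α(μ)X}) r (e^{−α(λ)X}⊗e^{−α(μ)X}) − (α(λ)−α(μ))·C. -/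

noncomputable section
open Matrix Complex
open scoped Kronecker BigOperators

variable (N : ℕ)

/-- condition (a): Cartan invariance [h⊗Id + Id⊗h, r] = 0 for every diagonal h -/
def CartanInv (A : Matrix (Fin N × Fin N) (Fin N × Fin N) ℂ) : Prop :=
  ∀ d : Fin N → ℂ,
    (Matrix.diagonal d ⊗ₖ (1 : Matrix (Fin N) (Fin N) ℂ) +
      (1 : Matrix (Fin N) (Fin N) ℂ) ⊗ₖ Matrix.diagonal d) * A =
    A * (Matrix.diagonal d ⊗ₖ (1 : Matrix (Fin N) (Fin N) ℂ) +
      (1 : Matrix (Fin N) (Fin N) ℂ) ⊗ₖ Matrix.diagonal d)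

/-- the generalized classical Yang–Baxter equation for a function r(λ,μ,x)
    at spectral parameters λ₁, λ₂, λ₃ and point x -/
def GCYBE (r : ℂ → ℂ → (Fin N → ℂ) → Matrix (Fin N × Fin N) (Fin N × Fin N) ℂ)
    (lam₁ lam₂ lam₃ : ℂ) (x : Fin N → ℂ) : Prop :=
  mcomm (pl12 N (r lam₁ lam₂ x)) (pl13 N (r lam₁ lam₃ x)) +
  mcomm (pl12 N (r lam₁ lam₂ x)) (pl23 N (r lam₂ lam₃ x)) +
  mcomm (pl13 N (r lam₁ lam₃ x)) (pl23 N (r lam₂ lam₃ x)) -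
  (∑ ν : Fin N, pl1 N (E N ν ν) * pl23 N (pderivMat N ν (r lam₂ lam₃) x)) +
  (∑ ν : Fin N, pl2 N (E N ν ν) * pl13 N (pderivMat N ν (r lam₁ lam₃) x)) -
  (∑ ν : Fin N, pl3 N (E N ν ν) * pl12 N (pderivMat N ν (r lam₁ lam₂) x)) = 0

/-- X(x) = diag(x₁,…,x_N) − ((x₁+…+x_N)/N)·Id -/
def Xmat (x : Fin N → ℂ) : Matrix (Fin N) (Fin N) ℂ :=
  Matrix.diagonal x - ((∑ i : Fin N, x i) / (N : ℂ)) • (1 : Matrix (Fin N) (Fin N) ℂ)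

/-- C = Σ_i e_{ii}⊗e_{ii} − (1/N) Id⊗Id -/
def Cmat : Matrix (Fin N × Fin N) (Fin N × Fin N) ℂ :=
  (∑ i : Fin N, E N i i ⊗ₖ E N i i) -
    ((N : ℂ))⁻¹ • (1 : Matrix (Fin N × Fin N) (Fin N × Fin N) ℂ)

/-- the gauge-transformed r-matrix r̃ -/
def rGauge (α : ℂ → ℂ) (r : ℂ → ℂ → (Fin N → ℂ) → Matrix (Fin N × Fin N) (Fin N × Fin N) ℂ)
    (lam mu : ℂ) (x : Fin N → ℂ) : Matrix (Fin N × Fin N) (Fin N × Fin N) ℂ :=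
  (NormedSpace.exp (α lam • Xmat N x) ⊗ₖ NormedSpace.exp (α mu • Xmat N x)) *
    r lam mu x *
    (NormedSpace.exp (-(α lam) • Xmat N x) ⊗ₖ NormedSpace.exp (-(α mu) • Xmat N x)) -
  (α lam - α mu) • Cmat N

/-!
In the diagonal basis, conjugating by `e^{aX} ⊗ e^{bX}` multiplies the `(p, q)` entry by
`exp (a (x_{p₁} - x_{q₁}) + b (x_{p₂} - x_{q₂}))`; the mean of `x` cancels. On `(ℂ^N)^{⊗3}` the
three conjugations of `r₁₂, r₁₃, r₂₃` become one conjugation by a diagonal matrix, which fixes the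
diagonal matrices `e_νν^{(a)}` and `C_{ab}` and therefore factors out of the whole GCYBE.
Differentiating the exponential adds `[α(λ) e_νν^{(1)} + α(μ) e_νν^{(2)}, r]` to `∂_ν r`; summed
over `ν` this is a commutator with a scalar, which gives (b). In the GCYBE these extra terms cancel the
cross commutators `[r_{ab}, C_{cd}]` produced by the shift by `C`, thanks to (a).
-/

variable {N}

section GaugeConjugation

variable {I : Type} [Fintype I] [DecidableEq I]

lemma mcomm_diagonal_apply (d : I → ℂ) (M : Matrix I I ℂ) (p q : I) :
    mcomm (diagonal d) M p q = (d p - d q) * M p q := by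
  simp only [mcomm, Matrix.sub_apply, diagonal_mul, mul_diagonal]
  ring

lemma mcomm_apply_diagonal (M : Matrix I I ℂ) (d : I → ℂ) (p q : I) :
    mcomm M (diagonal d) p q = (d q - d p) * M p q := by
  simp only [mcomm, Matrix.sub_apply, diagonal_mul, mul_diagonal]
  ring

lemma mcomm_sub_smul_diagonal (A B : Matrix I I ℂ) (s t : ℂ) (u v : I → ℂ) :
    mcomm (A - s • diagonal u) (B - t • diagonal v)
      = mcomm A B - t • mcomm A (diagonal v) + s • mcomm B (diagonal u) := by
  have huv : diagonal u * diagonal v = diagonal v * diagonal u := (commute_diagonal u v).eq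
  simp only [mcomm, sub_mul, mul_sub, smul_mul_assoc, mul_smul_comm, smul_sub, huv, smul_smul,
    mul_comm s t]
  abel

lemma mcomm_diagonal_sub_smul_diagonal (d : I → ℂ) (A : Matrix I I ℂ) (s : ℂ) (e : I → ℂ) :
    mcomm (diagonal d) (A - s • diagonal e) = mcomm (diagonal d) A := by
  ext p q
  rw [mcomm_diagonal_apply, mcomm_diagonal_apply, Matrix.sub_apply, Matrix.smul_apply, mul_sub]
  by_cases h : p = q <;> simp [h]

lemma map_mcomm {J : Type} [Fintype J] [DecidableEq J] {F : Type*}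
    [FunLike F (Matrix I I ℂ) (Matrix J J ℂ)] [RingHomClass F (Matrix I I ℂ) (Matrix J J ℂ)]
    (f : F) (A B : Matrix I I ℂ) : f (mcomm A B) = mcomm (f A) (f B) := by
  simp only [mcomm, map_sub, map_mul]

def gaugeUnit (w : I → ℂ) : (Matrix I I ℂ)ˣ where
  val := diagonal fun i => exp (w i)
  inv := diagonal fun i => exp (-w i)
  val_inv := by simp [← exp_add]
  inv_val := by simp [← exp_add]

def gaugeConj (w : I → ℂ) : Matrix I I ℂ ≃ₐ[ℂ] Matrix I I ℂ :=
  MulSemiringAction.toAlgEquiv ℂ (Matrix I I ℂ) (ConjAct.toConjAct (gaugeUnit w))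

lemma gaugeConj_apply (w : I → ℂ) (M : Matrix I I ℂ) (p q : I) :
    gaugeConj w M p q = exp (w p - w q) * M p q := by
  simp only [gaugeConj, MulSemiringAction.toAlgEquiv_apply, ConjAct.units_smul_def,
    ConjAct.ofConjAct_toConjAct, gaugeUnit, Units.inv_mk, Units.val_mk, diagonal_mul, mul_diagonal,
    sub_eq_add_neg, exp_add]
  ring

lemma gaugeConj_diagonal (w d : I → ℂ) : gaugeConj w (diagonal d) = diagonal d := by
  ext p q
  rw [gaugeConj_apply]
  by_cases h : p = q <;> simp [h]

end GaugeConjugation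

section LegEmbedding

variable {T P K : Type} [DecidableEq K]

/-- `A` acting on the legs selected by `π`, and as the identity on the legs selected by `κ`. -/
def legEmbed (π : T → P) (κ : T → K) : Matrix P P ℂ →ₗ[ℂ] Matrix T T ℂ where
  toFun A := of fun p q => A (π p) (π q) * if κ p = κ q then 1 else 0
  map_add' A B := by ext p q; simp only [of_apply, Matrix.add_apply, add_mul]
  map_smul' s A := by ext p q; simp

lemma legEmbed_apply (π : T → P) (κ : T → K) (A : Matrix P P ℂ) (p q : T) :
    legEmbed π κ A p q = A (π p) (π q) * if κ p = κ q then 1 else 0 := rfl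

lemma legEmbed_diagonal [DecidableEq T] [DecidableEq P] {π : T → P} {κ : T → K}
    (hinj : Function.Injective fun p => (π p, κ p)) (d : P → ℂ) :
    legEmbed π κ (diagonal d) = diagonal fun p => d (π p) := by
  ext p q
  by_cases h : p = q
  · simp [legEmbed_apply, h]
  · have : π p ≠ π q ∨ κ p ≠ κ q := by
      by_contra! hpq
      exact h (hinj (Prod.ext hpq.1 hpq.2))
    rcases this with h' | h' <;> simp [legEmbed_apply, h, h']

variable [Fintype T] [DecidableEq T] [Fintype P] [DecidableEq P]

lemma legEmbed_mcomm_diagonal (π : T → P) (κ : T → K) (d : P → ℂ) (A : Matrix P P ℂ) :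
    legEmbed π κ (mcomm (diagonal d) A) = mcomm (diagonal (d ∘ π)) (legEmbed π κ A) := by
  ext p q
  simp only [legEmbed_apply, mcomm_diagonal_apply, Function.comp_apply, mul_assoc]

lemma legEmbed_gaugeConj (π : T → P) (κ : T → K) {w : P → ℂ} {W : T → ℂ}
    (hW : ∀ p q, κ p = κ q → W p - W q = w (π p) - w (π q)) (A : Matrix P P ℂ) :
    legEmbed π κ (gaugeConj w A) = gaugeConj W (legEmbed π κ A) := by
  ext p q
  simp only [legEmbed_apply, gaugeConj_apply]
  by_cases h : κ p = κ q
  · rw [hW p q h, mul_assoc]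
  · simp [h]

end LegEmbedding

lemma pl12_eq_legEmbed :
    pl12 N = legEmbed (fun p : Fin N × Fin N × Fin N => (p.1, p.2.1)) (fun p => p.2.2) := rfl

lemma pl13_eq_legEmbed :
    pl13 N = legEmbed (fun p : Fin N × Fin N × Fin N => (p.1, p.2.2)) (fun p => p.2.1) := rfl

lemma pl23_eq_legEmbed :
    pl23 N = legEmbed (fun p : Fin N × Fin N × Fin N => (p.2.1, p.2.2)) (fun p => p.1) := rfl

lemma E_self_eq_diagonal (ν : Fin N) : E N ν ν = diagonal (Pi.single ν 1) :=
  (diagonal_single ν 1).symm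

lemma pl1_diagonal (d : Fin N → ℂ) : pl1 N (diagonal d) = diagonal fun p => d p.1 := by
  ext ⟨i, j, k⟩ ⟨i', j', k'⟩
  by_cases hi : i = i' <;> by_cases hj : j = j' <;> by_cases hk : k = k' <;>
    simp [pl1, hi, hj, hk]

lemma pl2_diagonal (d : Fin N → ℂ) : pl2 N (diagonal d) = diagonal fun p => d p.2.1 := by
  ext ⟨i, j, k⟩ ⟨i', j', k'⟩
  by_cases hi : i = i' <;> by_cases hj : j = j' <;> by_cases hk : k = k' <;>
    simp [pl2, hi, hj, hk]

lemma pl3_diagonal (d : Fin N → ℂ) : pl3 N (diagonal d) = diagonal fun p => d p.2.2 := by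
  ext ⟨i, j, k⟩ ⟨i', j', k'⟩
  by_cases hi : i = i' <;> by_cases hj : j = j' <;> by_cases hk : k = k' <;>
    simp [pl3, hi, hj, hk]

lemma Cmat_eq_diagonal :
    Cmat N = diagonal fun p => (if p.1 = p.2 then 1 else 0) - (N : ℂ)⁻¹ := by
  simp only [Cmat, E_self_eq_diagonal, diagonal_kronecker_diagonal, smul_one_eq_diagonal,
    ← diagonal_sub]
  congr 1
  ext p q
  by_cases h : p = q <;> simp [Matrix.sum_apply, Pi.single_apply, h]

def pairWeight {ι : Type} (a b : ℂ) (x : ι → ℂ) (p : ι × ι) : ℂ := a * x p.1 + b * x p.2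

lemma diagonal_kronecker_one_add_one_kronecker_diagonal (d : Fin N → ℂ) :
    diagonal d ⊗ₖ (1 : Matrix (Fin N) (Fin N) ℂ) + (1 : Matrix (Fin N) (Fin N) ℂ) ⊗ₖ diagonal d
      = diagonal fun p => d p.1 + d p.2 := by
  rw [← diagonal_one, diagonal_kronecker_diagonal, diagonal_kronecker_diagonal, diagonal_add]
  simp

lemma cartanInv_iff_commute {A : Matrix (Fin N × Fin N) (Fin N × Fin N) ℂ} :
    CartanInv N A ↔ ∀ d : Fin N → ℂ, Commute (diagonal fun p => d p.1 + d p.2) A := by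
  simp only [CartanInv, diagonal_kronecker_one_add_one_kronecker_diagonal]
  rfl

namespace CartanInv

variable {A : Matrix (Fin N × Fin N) (Fin N × Fin N) ℂ}

lemma weight_mul_apply (hA : CartanInv N A) (d : Fin N → ℂ) (p q : Fin N × Fin N) :
    (d p.1 + d p.2) * A p q = A p q * (d q.1 + d q.2) := by
  simpa [diagonal_mul, mul_diagonal] using congrFun₂ (cartanInv_iff_commute.1 hA d).eq p q

lemma gaugeConj (hA : CartanInv N A) (w : Fin N × Fin N → ℂ) : CartanInv N (gaugeConj w A) := by
  rw [cartanInv_iff_commute] at hA ⊢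
  intro d
  simpa only [gaugeConj_diagonal] using (hA d).map (_root_.gaugeConj w)

lemma sub_smul_Cmat (hA : CartanInv N A) (s : ℂ) : CartanInv N (A - s • Cmat N) := by
  rw [cartanInv_iff_commute] at hA ⊢
  intro d
  rw [Cmat_eq_diagonal]
  exact (hA d).sub_right ((commute_diagonal _ _).smul_right s)

/-- With `(i, j, k) = (1, 2, 3)` this is, up to sign, everything that the shift by `C` and the
extra derivative terms contribute to the GCYBE through `r₁₂`. On the support of `r₁₂` the third
index `t` is fixed, and the `(p, q)` entry collapses to `a_k` times that of
`[e_tt^{(1)} + e_tt^{(2)}, r₁₂]`, which vanishes by (a). -/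
lemma shift_terms_cancel {T : Type} [Fintype T] [DecidableEq T] (hA : CartanInv N A)
    (i j k : T → Fin N) (ai aj ak m : ℂ) {u v : T → ℂ}
    (hu : ∀ p, u p = (if i p = k p then 1 else 0) - m)
    (hv : ∀ p, v p = (if j p = k p then 1 else 0) - m) :
    (ai - ak) • mcomm (legEmbed (fun p => (i p, j p)) k A) (diagonal u)
      + (aj - ak) • mcomm (legEmbed (fun p => (i p, j p)) k A) (diagonal v)
      + ∑ ν, diagonal (fun p => (Pi.single ν 1 : Fin N → ℂ) (k p))
          * mcomm (diagonal (pairWeight ai aj (Pi.single ν 1) ∘ fun p => (i p, j p)))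
              (legEmbed (fun p => (i p, j p)) k A) = 0 := by
  ext p q
  simp only [Matrix.add_apply, Matrix.smul_apply, Matrix.sum_apply, diagonal_mul,
    mcomm_apply_diagonal, mcomm_diagonal_apply, legEmbed_apply, hu, hv, Function.comp_apply,
    pairWeight, Matrix.zero_apply, smul_eq_mul]
  by_cases hk : k p = k q
  · have := hA.weight_mul_apply (Pi.single (k p) 1) (i p, j p) (i q, j q)
    simp only [hk, Pi.single_apply, sub_sub_sub_cancel_right, ↓reduceIte, mul_one, mul_ite,
      mul_zero, ite_mul, one_mul, zero_mul, Finset.sum_ite_eq, Finset.mem_univ] at this ⊢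
    split_ifs at this ⊢ <;> linear_combination ak * this
  · simp [hk]

end CartanInv

lemma exp_smul_Xmat (c : ℂ) (x : Fin N → ℂ) :
    NormedSpace.exp (c • Xmat N x) = diagonal fun i => exp (c * (x i - (∑ j, x j) / N)) := by
  have h : c • Xmat N x = diagonal fun i => c * (x i - (∑ j, x j) / N) := by
    ext i j
    by_cases h : i = j <;> simp [Xmat, h, Matrix.sub_apply, mul_sub]
  rw [h, exp_diagonal, Pi.exp_def]
  simp [← Complex.exp_eq_exp_ℂ]

/-- The mean of `x` in `X(x)` cancels in the conjugation, and `C` is diagonal. -/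
lemma rGauge_eq (α : ℂ → ℂ) (r : ℂ → ℂ → (Fin N → ℂ) → Matrix (Fin N × Fin N) (Fin N × Fin N) ℂ)
    (lam mu : ℂ) (x : Fin N → ℂ) :
    rGauge N α r lam mu x
      = gaugeConj (pairWeight (α lam) (α mu) x) (r lam mu x - (α lam - α mu) • Cmat N) := by
  have hC : gaugeConj (pairWeight (α lam) (α mu) x) (Cmat N) = Cmat N := by
    rw [Cmat_eq_diagonal, gaugeConj_diagonal]
  rw [map_sub, map_smul, hC, rGauge]
  congr 1
  ext p q
  simp only [exp_smul_Xmat, diagonal_kronecker_diagonal, mul_diagonal, diagonal_mul,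
    gaugeConj_apply, pairWeight, ← exp_add]
  rw [mul_right_comm, ← exp_add]
  congr 2
  ring

lemma CartanInv.rGauge {α : ℂ → ℂ}
    {r : ℂ → ℂ → (Fin N → ℂ) → Matrix (Fin N × Fin N) (Fin N × Fin N) ℂ} {lam mu : ℂ}
    {x : Fin N → ℂ} (h : CartanInv N (r lam mu x)) : CartanInv N (rGauge N α r lam mu x) := by
  rw [rGauge_eq]
  exact (h.sub_smul_Cmat _).gaugeConj _

lemma DifferentiableAt.comp_update {ι : Type} [Fintype ι] [DecidableEq ι] {g : (ι → ℂ) → ℂ}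
    {x : ι → ℂ} (hg : DifferentiableAt ℂ g x) (ν : ι) :
    DifferentiableAt ℂ (fun t => g (Function.update x ν t)) (x ν) := by
  rw [← Function.update_eq_self ν x] at hg
  exact hg.comp (x ν) (hasDerivAt_update x ν (x ν)).differentiableAt

lemma pderivMat_sub_const {I : Type} (ν : Fin N) (f : (Fin N → ℂ) → Matrix I I ℂ)
    (M : Matrix I I ℂ) (x : Fin N → ℂ) :
    pderivMat N ν (fun y => f y - M) x = pderivMat N ν f x := by
  ext p q
  simp [pderivMat, Matrix.sub_apply]

lemma pderivMat_gaugeConj {I : Type} [Fintype I] [DecidableEq I]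
    {f : (Fin N → ℂ) → Matrix I I ℂ} {w : (Fin N → ℂ) → I → ℂ} {d : I → ℂ}
    {x : Fin N → ℂ} {ν : Fin N}
    (hw : ∀ p, HasDerivAt (fun t => w (Function.update x ν t) p) (d p) (x ν))
    (hf : ∀ p q, DifferentiableAt ℂ (fun t => f (Function.update x ν t) p q) (x ν)) :
    pderivMat N ν (fun y => gaugeConj (w y) (f y)) x
      = gaugeConj (w x) (pderivMat N ν f x + mcomm (diagonal d) (f x)) := by
  ext p q
  have h : HasDerivAt (fun t => exp (w (Function.update x ν t) p - w (Function.update x ν t) q)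
      * f (Function.update x ν t) p q) _ (x ν) := ((hw p).sub (hw q)).cexp.mul (hf p q).hasDerivAt
  simp only [Pi.sub_apply, Function.update_eq_self] at h
  simp only [pderivMat, gaugeConj_apply, Matrix.add_apply, mcomm_diagonal_apply, h.deriv]
  ring

lemma hasDerivAt_pairWeight_update (a b : ℂ) (x : Fin N → ℂ) (ν : Fin N) (p : Fin N × Fin N) :
    HasDerivAt (fun t => pairWeight a b (Function.update x ν t) p)
      (pairWeight a b (Pi.single ν 1) p) (x ν) := by
  have hu := hasDerivAt_pi.1 (hasDerivAt_update x ν (x ν))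
  exact ((hu p.1).const_mul a).add ((hu p.2).const_mul b)

lemma pderivMat_rGauge {α : ℂ → ℂ}
    {r : ℂ → ℂ → (Fin N → ℂ) → Matrix (Fin N × Fin N) (Fin N × Fin N) ℂ} {lam mu : ℂ}
    {x : Fin N → ℂ} (hr : ∀ p q, DifferentiableAt ℂ (fun y => r lam mu y p q) x) (ν : Fin N) :
    pderivMat N ν (rGauge N α r lam mu) x
      = gaugeConj (pairWeight (α lam) (α mu) x) (pderivMat N ν (r lam mu) x
          + mcomm (diagonal (pairWeight (α lam) (α mu) (Pi.single ν 1))) (r lam mu x)) := by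
  rw [funext (rGauge_eq α r lam mu),
    pderivMat_gaugeConj (hasDerivAt_pairWeight_update _ _ x ν)
      (fun p q => ((hr p q).sub_const _).comp_update ν),
    pderivMat_sub_const, Cmat_eq_diagonal, mcomm_diagonal_sub_smul_diagonal]

lemma sum_mcomm_diagonal_pairWeight_single {ι : Type} [Fintype ι] [DecidableEq ι] (a b : ℂ)
    (M : Matrix (ι × ι) (ι × ι) ℂ) :
    ∑ ν, mcomm (diagonal (pairWeight a b (Pi.single ν 1))) M = 0 := by
  ext p q
  simp [Matrix.sum_apply, mcomm_diagonal_apply, ← Finset.sum_mul, pairWeight,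
    Finset.sum_add_distrib, ← Finset.mul_sum, Finset.sum_pi_single]

lemma sum_pderivMat_rGauge {α : ℂ → ℂ}
    {r : ℂ → ℂ → (Fin N → ℂ) → Matrix (Fin N × Fin N) (Fin N × Fin N) ℂ} {lam mu : ℂ}
    {x : Fin N → ℂ} (hr : ∀ p q, DifferentiableAt ℂ (fun y => r lam mu y p q) x)
    (hb : ∑ ν, pderivMat N ν (r lam mu) x = 0) :
    ∑ ν, pderivMat N ν (rGauge N α r lam mu) x = 0 := by
  simp only [pderivMat_rGauge hr, ← map_sum, Finset.sum_add_distrib, hb,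
    sum_mcomm_diagonal_pairWeight_single, add_zero, map_zero]

def cybeExpr (r12 r13 r23 : Matrix (Fin N × Fin N) (Fin N × Fin N) ℂ)
    (D12 D13 D23 : Fin N → Matrix (Fin N × Fin N) (Fin N × Fin N) ℂ) :
    Matrix (Fin N × Fin N × Fin N) (Fin N × Fin N × Fin N) ℂ :=
  mcomm (pl12 N r12) (pl13 N r13) + mcomm (pl12 N r12) (pl23 N r23) +
  mcomm (pl13 N r13) (pl23 N r23) -
  (∑ ν : Fin N, pl1 N (E N ν ν) * pl23 N (D23 ν)) +
  (∑ ν : Fin N, pl2 N (E N ν ν) * pl13 N (D13 ν)) -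
  (∑ ν : Fin N, pl3 N (E N ν ν) * pl12 N (D12 ν))

lemma gcybe_iff_cybeExpr_eq_zero
    {r : ℂ → ℂ → (Fin N → ℂ) → Matrix (Fin N × Fin N) (Fin N × Fin N) ℂ}
    {lam₁ lam₂ lam₃ : ℂ} {x : Fin N → ℂ} :
    GCYBE N r lam₁ lam₂ lam₃ x ↔
      cybeExpr (r lam₁ lam₂ x) (r lam₁ lam₃ x) (r lam₂ lam₃ x)
        (fun ν => pderivMat N ν (r lam₁ lam₂) x) (fun ν => pderivMat N ν (r lam₁ lam₃) x)
        (fun ν => pderivMat N ν (r lam₂ lam₃) x) = 0 :=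
  Iff.rfl

section LegGauge

def tripleWeight {ι : Type} (a b c : ℂ) (x : ι → ℂ) (p : ι × ι × ι) : ℂ :=
  a * x p.1 + b * x p.2.1 + c * x p.2.2

variable (a b c : ℂ) (x : Fin N → ℂ) (M : Matrix (Fin N × Fin N) (Fin N × Fin N) ℂ)

lemma pl12_gaugeConj :
    pl12 N (gaugeConj (pairWeight a b x) M) = gaugeConj (tripleWeight a b c x) (pl12 N M) :=
  legEmbed_gaugeConj _ _ (fun p q h => by simp only [tripleWeight, pairWeight, h]; ring) M

lemma pl13_gaugeConj :
    pl13 N (gaugeConj (pairWeight a c x) M) = gaugeConj (tripleWeight a b c x) (pl13 N M) :=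
  legEmbed_gaugeConj _ _ (fun p q h => by simp only [tripleWeight, pairWeight, h]; ring) M

lemma pl23_gaugeConj :
    pl23 N (gaugeConj (pairWeight b c x) M) = gaugeConj (tripleWeight a b c x) (pl23 N M) :=
  legEmbed_gaugeConj _ _ (fun p q h => by simp only [tripleWeight, pairWeight, h]; ring) M

end LegGauge

lemma cybeExpr_gaugeConj (a b c : ℂ) (x : Fin N → ℂ)
    (r12 r13 r23 : Matrix (Fin N × Fin N) (Fin N × Fin N) ℂ)
    (D12 D13 D23 : Fin N → Matrix (Fin N × Fin N) (Fin N × Fin N) ℂ) :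
    cybeExpr (gaugeConj (pairWeight a b x) r12) (gaugeConj (pairWeight a c x) r13)
        (gaugeConj (pairWeight b c x) r23) (fun ν => gaugeConj (pairWeight a b x) (D12 ν))
        (fun ν => gaugeConj (pairWeight a c x) (D13 ν))
        (fun ν => gaugeConj (pairWeight b c x) (D23 ν))
      = gaugeConj (tripleWeight a b c x) (cybeExpr r12 r13 r23 D12 D13 D23) := by
  simp only [cybeExpr, pl12_gaugeConj a b c, pl13_gaugeConj a b c, pl23_gaugeConj a b c, map_add,
    map_sub, map_sum, map_mul, map_mcomm, E_self_eq_diagonal, pl1_diagonal, pl2_diagonal,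
    pl3_diagonal, gaugeConj_diagonal]

lemma cybeExpr_sub_smul_Cmat (a b c : ℂ) {A12 A13 A23 : Matrix (Fin N × Fin N) (Fin N × Fin N) ℂ}
    (h12 : CartanInv N A12) (h13 : CartanInv N A13) (h23 : CartanInv N A23)
    (D12 D13 D23 : Fin N → Matrix (Fin N × Fin N) (Fin N × Fin N) ℂ) :
    cybeExpr (A12 - (a - b) • Cmat N) (A13 - (a - c) • Cmat N) (A23 - (b - c) • Cmat N)
        (fun ν => D12 ν + mcomm (diagonal (pairWeight a b (Pi.single ν 1))) A12)
        (fun ν => D13 ν + mcomm (diagonal (pairWeight a c (Pi.single ν 1))) A13)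
        (fun ν => D23 ν + mcomm (diagonal (pairWeight b c (Pi.single ν 1))) A23)
      = cybeExpr A12 A13 A23 D12 D13 D23 := by
  have c12 := h12.shift_terms_cancel (fun p : Fin N × Fin N × Fin N => p.1) (·.2.1) (·.2.2)
    a b c (N : ℂ)⁻¹ (fun _ => rfl) (fun _ => rfl)
  have c13 := h13.shift_terms_cancel (fun p : Fin N × Fin N × Fin N => p.1) (·.2.2) (·.2.1)
    a c b (N : ℂ)⁻¹ (fun _ => rfl)
    (v := fun p => (if p.2.1 = p.2.2 then 1 else 0) - (N : ℂ)⁻¹)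
    (fun p => by simp only [@eq_comm _ p.2.1])
  have c23 := h23.shift_terms_cancel (fun p : Fin N × Fin N × Fin N => p.2.1) (·.2.2) (·.1)
    b c a (N : ℂ)⁻¹ (u := fun p => (if p.1 = p.2.1 then 1 else 0) - (N : ℂ)⁻¹)
    (v := fun p => (if p.1 = p.2.2 then 1 else 0) - (N : ℂ)⁻¹)
    (fun p => by simp only [@eq_comm _ p.1]) (fun p => by simp only [@eq_comm _ p.1])
  beta_reduce at c12 c13 c23
  have i12 : Function.Injective fun p : Fin N × Fin N × Fin N => ((p.1, p.2.1), p.2.2) :=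
    fun p q h => by simp_all [Prod.ext_iff]
  have i13 : Function.Injective fun p : Fin N × Fin N × Fin N => ((p.1, p.2.2), p.2.1) :=
    fun p q h => by simp_all [Prod.ext_iff]
  have i23 : Function.Injective fun p : Fin N × Fin N × Fin N => ((p.2.1, p.2.2), p.1) :=
    fun p q h => by simp_all [Prod.ext_iff]
  simp only [cybeExpr, pl12_eq_legEmbed, pl13_eq_legEmbed, pl23_eq_legEmbed, map_sub, map_add,
    map_smul, legEmbed_mcomm_diagonal, Cmat_eq_diagonal, legEmbed_diagonal i12,
    legEmbed_diagonal i13, legEmbed_diagonal i23, E_self_eq_diagonal, pl1_diagonal, pl2_diagonal,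
    pl3_diagonal, mcomm_sub_smul_diagonal, mul_add, Finset.sum_add_distrib]
  linear_combination (norm := module) -c12 + c13 - c23

lemma GCYBE.rGauge (α : ℂ → ℂ)
    {r : ℂ → ℂ → (Fin N → ℂ) → Matrix (Fin N × Fin N) (Fin N × Fin N) ℂ}
    {lam₁ lam₂ lam₃ : ℂ} {x : Fin N → ℂ}
    (hd₁₂ : ∀ p q, DifferentiableAt ℂ (fun y => r lam₁ lam₂ y p q) x)
    (hd₁₃ : ∀ p q, DifferentiableAt ℂ (fun y => r lam₁ lam₃ y p q) x)
    (hd₂₃ : ∀ p q, DifferentiableAt ℂ (fun y => r lam₂ lam₃ y p q) x)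
    (ha₁₂ : CartanInv N (r lam₁ lam₂ x)) (ha₁₃ : CartanInv N (r lam₁ lam₃ x))
    (ha₂₃ : CartanInv N (r lam₂ lam₃ x)) (h : GCYBE N r lam₁ lam₂ lam₃ x) :
    GCYBE N (rGauge N α r) lam₁ lam₂ lam₃ x := by
  rw [gcybe_iff_cybeExpr_eq_zero] at h ⊢
  simp only [rGauge_eq, pderivMat_rGauge hd₁₂, pderivMat_rGauge hd₁₃, pderivMat_rGauge hd₂₃]
  rw [cybeExpr_gaugeConj, cybeExpr_sub_smul_Cmat _ _ _ ha₁₂ ha₁₃ ha₂₃, h, map_zero]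

theorem gauge_freedom_GCYBE_general
    (Λ : Set ℂ) (U : Set (Fin N → ℂ)) (hU : IsOpen U)
    (r : ℂ → ℂ → (Fin N → ℂ) → Matrix (Fin N × Fin N) (Fin N × Fin N) ℂ)
    (hdiff : ∀ lam ∈ Λ, ∀ mu ∈ Λ, ∀ p q : Fin N × Fin N,
      DifferentiableOn ℂ (fun x => r lam mu x p q) U)
    (ha : ∀ lam ∈ Λ, ∀ mu ∈ Λ, ∀ x ∈ U, CartanInv N (r lam mu x))
    (hb : ∀ lam ∈ Λ, ∀ mu ∈ Λ, ∀ x ∈ U,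
      (∑ ν : Fin N, pderivMat N ν (r lam mu) x) = 0)
    (hc : ∀ lam₁ ∈ Λ, ∀ lam₂ ∈ Λ, ∀ lam₃ ∈ Λ, ∀ x ∈ U, GCYBE N r lam₁ lam₂ lam₃ x)
    (α : ℂ → ℂ) :
    (∀ lam ∈ Λ, ∀ mu ∈ Λ, ∀ x ∈ U, CartanInv N (rGauge N α r lam mu x)) ∧
    (∀ lam ∈ Λ, ∀ mu ∈ Λ, ∀ x ∈ U,
      (∑ ν : Fin N, pderivMat N ν (rGauge N α r lam mu) x) = 0) ∧
    (∀ lam₁ ∈ Λ, ∀ lam₂ ∈ Λ, ∀ lam₃ ∈ Λ, ∀ x ∈ U,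
      GCYBE N (rGauge N α r) lam₁ lam₂ lam₃ x) := by
  have hr : ∀ lam ∈ Λ, ∀ mu ∈ Λ, ∀ x ∈ U, ∀ p q,
      DifferentiableAt ℂ (fun y => r lam mu y p q) x := fun lam hl mu hm x hx p q =>
    (hdiff lam hl mu hm p q).differentiableAt (hU.mem_nhds hx)
  refine ⟨fun lam hl mu hm x hx => ?_, fun lam hl mu hm x hx => ?_,
    fun lam₁ h₁ lam₂ h₂ lam₃ h₃ x hx => ?_⟩
  · exact (ha lam hl mu hm x hx).rGauge
  · exact sum_pderivMat_rGauge (hr lam hl mu hm x hx) (hb lam hl mu hm x hx)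
  · exact (hc lam₁ h₁ lam₂ h₂ lam₃ h₃ x hx).rGauge α (hr lam₁ h₁ lam₂ h₂ x hx)
      (hr lam₁ h₁ lam₃ h₃ x hx) (hr lam₂ h₂ lam₃ h₃ x hx) (ha lam₁ h₁ lam₂ h₂ x hx)
      (ha lam₁ h₁ lam₃ h₃ x hx) (ha lam₂ h₂ lam₃ h₃ x hx)

theorem gauge_freedom_GCYBE (hN : 2 ≤ N)
    (Λ : Set ℂ) (U : Set (Fin N → ℂ)) (hU : IsOpen U)
    (r : ℂ → ℂ → (Fin N → ℂ) → Matrix (Fin N × Fin N) (Fin N × Fin N) ℂ)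
    (hdiff : ∀ lam ∈ Λ, ∀ mu ∈ Λ, ∀ p q : Fin N × Fin N,
      DifferentiableOn ℂ (fun x => r lam mu x p q) U)
    (ha : ∀ lam ∈ Λ, ∀ mu ∈ Λ, ∀ x ∈ U, CartanInv N (r lam mu x))
    (hb : ∀ lam ∈ Λ, ∀ mu ∈ Λ, ∀ x ∈ U,
      (∑ ν : Fin N, pderivMat N ν (r lam mu) x) = 0)
    (hc : ∀ lam₁ ∈ Λ, ∀ lam₂ ∈ Λ, ∀ lam₃ ∈ Λ, ∀ x ∈ U, GCYBE N r lam₁ lam₂ lam₃ x)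
    (α : ℂ → ℂ) :
    (∀ lam ∈ Λ, ∀ mu ∈ Λ, ∀ x ∈ U, CartanInv N (rGauge N α r lam mu x)) ∧
    (∀ lam ∈ Λ, ∀ mu ∈ Λ, ∀ x ∈ U,
      (∑ ν : Fin N, pderivMat N ν (rGauge N α r lam mu) x) = 0) ∧
    (∀ lam₁ ∈ Λ, ∀ lam₂ ∈ Λ, ∀ lam₃ ∈ Λ, ∀ x ∈ U,
      GCYBE N (rGauge N α r) lam₁ lam₂ lam₃ x) :=
  gauge_freedom_GCYBE_general Λ U hU r hdiff ha hb hc α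
end
end

section
/- Conjugation by the shift operator turns the Felder L-operator algebra into the quantum Lax algebra: let R: ℂ^N → End(ℂ^N⊗ℂ^N) satisfy the zero-weight condition R_{(ij),(kl)}(x) = 0 unless δ_i+δ_j = δ_k+δ_l and the translation condition R_{(ij),(kl)}(x+t(δ_i+δ_j)) = R_{(ij),(kl)}(x) for all t ∈ ℂ. Let L̃: ℂ^N → M_N(End W) be a matrix-valued function whose entries satisfy L̃_{ab}(x)(W_μ) ⊆ W_{μ−δ_a+δ_b} and the relation R_{12}(x+γh^{(q)}) L̃_1(x−γh^{(2)}) L̃_2(x+γh^{(1)}) = L̃_2(x−γh^{(1)}) L̃_1(x+γh^{(2)}) R_{12}(x−γh^{(q)}) as End(ℂ^N⊗ℂ^N⊗W)-valued functions of x. Define operators on V: L_{ab} := T_a ∘ M_{ab} ∘ T_b, where (T_c u)(x) = u(x+γδ_c) and (M_{ab}u)(x) = L̃_{ab}(x)(u(x)). Then L satisfies the quantum Lax relation R_{12}(x+γh^{(q)}) L_1 L_2 = L_2 L_1 R_{12}(x−γh^{(q)}) as operators on functions ℂ^N → ℂ^N⊗ℂ^N⊗W, where L_1 = Σ_{a,b}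 e_{ab}⊗Id⊗L_{ab} and L_2 = Σ_{a,b} Id⊗e_{ab}⊗L_{ab}. -/
/- STATEMENT 11: Conjugation by the shift operator turns the Felder L-operator
   algebra into the quantum Lax algebra: if L̃ satisfies the dynamical RLL
   relation, then L_{ab} := T_a ∘ M_{ab} ∘ T_b (with (T_c u)(x) = u(x+γδ_c),
   (M_{ab}u)(x) = L̃_{ab}(x)(u(x))) satisfies
   R₁₂(x+γh^{(q)}) L₁ L₂ = L₂ L₁ R₁₂(x−γh^{(q)}). -/

noncomputable section
open Matrix Complex
open scoped BigOperators

variable (N : ℕ) (γ : ℂ)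
variable {W : Type} [AddCommGroup W] [Module ℂ W]

/-- R₁₂(x + s·h^{(q)}) as a matrix over the two auxiliary indices with values
    in End W : on the weight-μ component (projection π μ) it acts as R(x+sμ)⊗Id. -/
def Rq (R : (Fin N → ℂ) → Matrix (Fin N × Fin N) (Fin N × Fin N) ℂ)
    (M : Finset (Fin N → ℂ)) (π : (Fin N → ℂ) → Module.End ℂ W)
    (s : ℂ) (x : Fin N → ℂ) :
    Matrix (Fin N × Fin N) (Fin N × Fin N) (Module.End ℂ W) :=
  fun p r => ∑ μ ∈ M, R (x + s • μ) p r • π μ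

/-- L̃ placed in auxiliary factor 1, with argument shifted by s·h^{(2)} -/
def L1sh (L : (Fin N → ℂ) → Fin N → Fin N → Module.End ℂ W) (s : ℂ) (x : Fin N → ℂ) :
    Matrix (Fin N × Fin N) (Fin N × Fin N) (Module.End ℂ W) :=
  fun p r => if p.2 = r.2 then L (x + s • (Pi.single r.2 1 : Fin N → ℂ)) p.1 r.1 else 0

/-- L̃ placed in auxiliary factor 2, with argument shifted by s·h^{(1)} -/
def L2sh (L : (Fin N → ℂ) → Fin N → Fin N → Module.End ℂ W) (s : ℂ) (x : Fin N → ℂ) :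
    Matrix (Fin N × Fin N) (Fin N × Fin N) (Module.End ℂ W) :=
  fun p r => if p.1 = r.1 then L (x + s • (Pi.single r.1 1 : Fin N → ℂ)) p.2 r.2 else 0

/-- the shift operator (T_c u)(x) = u(x + γ δ_c) on V = (ℂ^N → W) -/
def Tshift (c : Fin N) (u : (Fin N → ℂ) → W) : (Fin N → ℂ) → W :=
  fun x => u (x + γ • (Pi.single c 1 : Fin N → ℂ))

/-- the multiplication operator (M_{ab} u)(x) = L̃_{ab}(x)(u(x)) -/
def Mop (L : (Fin N → ℂ) → Fin N → Fin N → Module.End ℂ W) (a b : Fin N)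
    (u : (Fin N → ℂ) → W) : (Fin N → ℂ) → W :=
  fun x => L x a b (u x)

/-- the quantum Lax operator L_{ab} := T_a ∘ M_{ab} ∘ T_b -/
def Lax (L : (Fin N → ℂ) → Fin N → Fin N → Module.End ℂ W) (a b : Fin N)
    (u : (Fin N → ℂ) → W) : (Fin N → ℂ) → W :=
  Tshift N γ a (Mop N L a b (Tshift N γ b u))

/-- L₁ = Σ_{a,b} e_{ab}⊗Id⊗L_{ab} acting on functions ℂ^N → ℂ^N⊗ℂ^N⊗W -/
def Lax1 (L : (Fin N → ℂ) → Fin N → Fin N → Module.End ℂ W)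
    (u : (Fin N → ℂ) → Fin N × Fin N → W) : (Fin N → ℂ) → Fin N × Fin N → W :=
  fun x p => ∑ b : Fin N, Lax N γ L p.1 b (fun y => u y (b, p.2)) x

/-- L₂ = Σ_{a,b} Id⊗e_{ab}⊗L_{ab} -/
def Lax2 (L : (Fin N → ℂ) → Fin N → Fin N → Module.End ℂ W)
    (u : (Fin N → ℂ) → Fin N × Fin N → W) : (Fin N → ℂ) → Fin N × Fin N → W :=
  fun x p => ∑ b : Fin N, Lax N γ L p.2 b (fun y => u y (p.1, b)) x

/-- R₁₂(x + s·h^{(q)}) acting on functions ℂ^N → ℂ^N⊗ℂ^N⊗W -/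
def Rop (R : (Fin N → ℂ) → Matrix (Fin N × Fin N) (Fin N × Fin N) ℂ)
    (M : Finset (Fin N → ℂ)) (π : (Fin N → ℂ) → Module.End ℂ W) (s : ℂ)
    (u : (Fin N → ℂ) → Fin N × Fin N → W) : (Fin N → ℂ) → Fin N × Fin N → W :=
  fun x p => ∑ r : Fin N × Fin N, ∑ μ ∈ M, R (x + s • μ) p r • π μ (u x r)


private lemma reorderA {β : Type} (M : Finset β) (f : Fin N → Fin N → β → Fin N → Fin N → W) :
    (∑ m, ∑ n, ∑ μ ∈ M, ∑ k, ∑ l, f m n μ k l) = ∑ k, ∑ l, ∑ m, ∑ n, ∑ μ ∈ M, f m n μ k l := by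
  conv_lhs => enter [2, m, 2, n]; rw [Finset.sum_comm]
  conv_lhs => enter [2, m, 2, n, 2, k]; rw [Finset.sum_comm]
  conv_lhs => enter [2, m]; rw [Finset.sum_comm]
  rw [Finset.sum_comm]
  conv_lhs => enter [2, k, 2, m]; rw [Finset.sum_comm]
  conv_lhs => enter [2, k]; rw [Finset.sum_comm]

private lemma reorderB {β : Type} (M : Finset β) (f : Fin N → Fin N → Fin N → Fin N → β → W) :
    (∑ c, ∑ b, ∑ k, ∑ l, ∑ μ ∈ M, f c b k l μ) = ∑ k, ∑ l, ∑ c, ∑ b, ∑ μ ∈ M, f c b k l μ := by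
  conv_lhs => enter [2, c]; rw [Finset.sum_comm]
  rw [Finset.sum_comm]
  conv_lhs => enter [2, k, 2, c]; rw [Finset.sum_comm]
  conv_lhs => enter [2, k]; rw [Finset.sum_comm]

private lemma claim1 (R : (Fin N → ℂ) → Matrix (Fin N × Fin N) (Fin N × Fin N) ℂ)
    (M : Finset (Fin N → ℂ)) (π : (Fin N → ℂ) → Module.End ℂ W)
    (L : (Fin N → ℂ) → Fin N → Fin N → Module.End ℂ W)
    (w : Fin N → Fin N → W) (y : Fin N → ℂ) (i j : Fin N) :
    (∑ k, ∑ l, ((Rq N R M π γ y * L1sh N L (-γ) y * L2sh N L γ y) (i, j) (k, l)) (w k l))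
      = ∑ k, ∑ l, ∑ m, ∑ n, ∑ μ ∈ M,
        R (y + γ • μ) (i, j) (m, n) •
          π μ (L (y + (-γ) • (Pi.single n 1 : Fin N → ℂ)) m k
            (L (y + γ • (Pi.single k 1 : Fin N → ℂ)) n l (w k l))) := by
  simp only [Matrix.mul_apply, Rq, L1sh, L2sh, Fintype.sum_prod_type, Finset.sum_mul,
    Finset.mul_sum, smul_mul_assoc, mul_ite, ite_mul, mul_zero, zero_mul,
    Finset.sum_ite_eq, Finset.sum_ite_eq', Finset.mem_univ, if_true,
    LinearMap.sum_apply, LinearMap.smul_apply, Module.End.mul_apply, LinearMap.zero_apply,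
    Finset.sum_ite_irrel, Finset.sum_const_zero, smul_zero]
  exact Finset.sum_congr rfl fun k _ => Finset.sum_congr rfl fun l _ => Finset.sum_comm

private lemma claim2 (R : (Fin N → ℂ) → Matrix (Fin N × Fin N) (Fin N × Fin N) ℂ)
    (M : Finset (Fin N → ℂ)) (π : (Fin N → ℂ) → Module.End ℂ W)
    (L : (Fin N → ℂ) → Fin N → Fin N → Module.End ℂ W)
    (w : Fin N → Fin N → W) (y : Fin N → ℂ) (i j : Fin N) :
    (∑ k, ∑ l, ((L2sh N L (-γ) y * L1sh N L γ y * Rq N R M π (-γ) y) (i, j) (k, l)) (w k l))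
      = ∑ k, ∑ l, ∑ c, ∑ b, ∑ μ ∈ M,
        L (y + (-γ) • (Pi.single i 1 : Fin N → ℂ)) j c
          (L (y + γ • (Pi.single c 1 : Fin N → ℂ)) i b
            (R (y + (-γ) • μ) (b, c) (k, l) • π μ (w k l))) := by
  simp only [Matrix.mul_apply, Rq, L1sh, L2sh, Fintype.sum_prod_type, Finset.sum_mul,
    Finset.mul_sum, smul_mul_assoc, mul_smul_comm, mul_ite, ite_mul, mul_zero, zero_mul,
    Finset.sum_ite_eq, Finset.sum_ite_eq', Finset.mem_univ, if_true,
    LinearMap.sum_apply, LinearMap.smul_apply, Module.End.mul_apply, LinearMap.zero_apply,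
    Finset.sum_ite_irrel, Finset.sum_const_zero, smul_zero, map_sum, _root_.map_smul]
  exact Finset.sum_congr rfl fun k _ => Finset.sum_congr rfl fun l _ => Finset.sum_comm
theorem shift_conjugation_gives_quantum_Lax (hN : 2 ≤ N)
    (R : (Fin N → ℂ) → Matrix (Fin N × Fin N) (Fin N × Fin N) ℂ)
    -- zero-weight condition on R
    (hzw : ∀ x : Fin N → ℂ, ∀ i j k l : Fin N,
      (Pi.single i 1 : Fin N → ℂ) + Pi.single j 1 ≠
        (Pi.single k 1 : Fin N → ℂ) + Pi.single l 1 →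
      R x (i, j) (k, l) = 0)
    -- translation condition on R
    (htr : ∀ x : Fin N → ℂ, ∀ t : ℂ, ∀ i j k l : Fin N,
      R (x + t • ((Pi.single i 1 : Fin N → ℂ) + Pi.single j 1)) (i, j) (k, l) =
        R x (i, j) (k, l))
    -- the graded quantum space W = ⊕_{μ∈M} W_μ via grading projections π
    (M : Finset (Fin N → ℂ)) (π : (Fin N → ℂ) → Module.End ℂ W)
    (hidem : ∀ μ, π μ ∘ₗ π μ = π μ)
    (horth : ∀ μ ν, μ ≠ ν → π μ ∘ₗ π ν = 0)
    (hcompl : (∑ μ ∈ M, π μ) = LinearMap.id)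
    (hsupp : ∀ μ ∉ M, π μ = 0)
    (L : (Fin N → ℂ) → Fin N → Fin N → Module.End ℂ W)
    -- grading condition L̃_{ab}(x)(W_μ) ⊆ W_{μ−δ_a+δ_b}
    (hgr : ∀ x a b μ, L x a b ∘ₗ π μ =
      π (μ - (Pi.single a 1 : Fin N → ℂ) + Pi.single b 1) ∘ₗ L x a b ∘ₗ π μ)
    -- the dynamical RLL relation for L̃
    (hRLL : ∀ x : Fin N → ℂ,
      Rq N R M π γ x * L1sh N L (-γ) x * L2sh N L γ x =
      L2sh N L (-γ) x * L1sh N L γ x * Rq N R M π (-γ) x) :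
    -- conclusion: the quantum Lax relation
    -- R₁₂(x+γh^{(q)}) L₁ L₂ = L₂ L₁ R₁₂(x−γh^{(q)})
    ∀ u : (Fin N → ℂ) → Fin N × Fin N → W,
      Rop N R M π γ (Lax1 N γ L (Lax2 N γ L u)) =
      Lax2 N γ L (Lax1 N γ L (Rop N R M π (-γ) u)) := by
  intro u
  funext x p
  obtain ⟨i, j⟩ := p
  set y : Fin N → ℂ := x + γ • (Pi.single i 1 : Fin N → ℂ) + γ • (Pi.single j 1 : Fin N → ℂ)
    with hy
  have hL : Rop N R M π γ (Lax1 N γ L (Lax2 N γ L u)) x (i, j)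
      = ∑ m, ∑ n, ∑ μ ∈ M, ∑ k, ∑ l,
        R (x + γ • μ) (i, j) (m, n) •
          π μ (L (x + γ • (Pi.single m 1 : Fin N → ℂ)) m k
            (L (x + γ • (Pi.single m 1 : Fin N → ℂ) + γ • (Pi.single k 1 : Fin N → ℂ)
                  + γ • (Pi.single n 1 : Fin N → ℂ)) n l
              (u (x + γ • (Pi.single m 1 : Fin N → ℂ) + γ • (Pi.single k 1 : Fin N → ℂ)
                  + γ • (Pi.single n 1 : Fin N → ℂ) + γ • (Pi.single l 1 : Fin N → ℂ)) (k, l)))) := by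
    simp only [Rop, Lax1, Lax2, Lax, Tshift, Mop, Fintype.sum_prod_type, map_sum, Finset.smul_sum]
  have hL' : (∑ m, ∑ n, ∑ μ ∈ M, ∑ k, ∑ l,
        R (x + γ • μ) (i, j) (m, n) •
          π μ (L (x + γ • (Pi.single m 1 : Fin N → ℂ)) m k
            (L (x + γ • (Pi.single m 1 : Fin N → ℂ) + γ • (Pi.single k 1 : Fin N → ℂ)
                  + γ • (Pi.single n 1 : Fin N → ℂ)) n l
              (u (x + γ • (Pi.single m 1 : Fin N → ℂ) + γ • (Pi.single k 1 : Fin N → ℂ)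
                  + γ • (Pi.single n 1 : Fin N → ℂ) + γ • (Pi.single l 1 : Fin N → ℂ)) (k, l)))))
      = ∑ m, ∑ n, ∑ μ ∈ M, ∑ k, ∑ l,
        R (y + γ • μ) (i, j) (m, n) •
          π μ (L (y + (-γ) • (Pi.single n 1 : Fin N → ℂ)) m k
            (L (y + γ • (Pi.single k 1 : Fin N → ℂ)) n l
              (u (y + γ • (Pi.single k 1 : Fin N → ℂ) + γ • (Pi.single l 1 : Fin N → ℂ)) (k, l)))) := by
    refine Finset.sum_congr rfl fun m _ => Finset.sum_congr rfl fun n _ =>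
      Finset.sum_congr rfl fun μ _ => Finset.sum_congr rfl fun k _ =>
      Finset.sum_congr rfl fun l _ => ?_
    by_cases h : (Pi.single m 1 : Fin N → ℂ) + Pi.single n 1 = Pi.single i 1 + Pi.single j 1
    · have e2 : x + γ • (Pi.single m 1 : Fin N → ℂ) + γ • (Pi.single k 1 : Fin N → ℂ)
          + γ • (Pi.single n 1 : Fin N → ℂ) = y + γ • (Pi.single k 1 : Fin N → ℂ) := by
        rw [hy]; linear_combination (norm := module) γ • h
      have e1 : x + γ • (Pi.single m 1 : Fin N → ℂ) = y + (-γ) • (Pi.single n 1 : Fin N → ℂ) := by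
        rw [hy]; linear_combination (norm := module) γ • h
      have e4 : R (y + γ • μ) (i, j) (m, n) = R (x + γ • μ) (i, j) (m, n) := by
        rw [hy, show x + γ • (Pi.single i 1 : Fin N → ℂ) + γ • (Pi.single j 1 : Fin N → ℂ) + γ • μ
            = x + γ • μ + γ • ((Pi.single i 1 : Fin N → ℂ) + Pi.single j 1) by module]
        exact htr _ γ i j m n
      rw [e2, e1, e4]
    · rw [hzw _ i j m n fun e => h e.symm, hzw _ i j m n fun e => h e.symm, zero_smul, zero_smul]
  have hR : Lax2 N γ L (Lax1 N γ L (Rop N R M π (-γ) u)) x (i, j)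
      = ∑ c, ∑ b, ∑ k, ∑ l, ∑ μ ∈ M,
        L (x + γ • (Pi.single j 1 : Fin N → ℂ)) j c
          (L (x + γ • (Pi.single j 1 : Fin N → ℂ) + γ • (Pi.single c 1 : Fin N → ℂ)
                + γ • (Pi.single i 1 : Fin N → ℂ)) i b
            (R (x + γ • (Pi.single j 1 : Fin N → ℂ) + γ • (Pi.single c 1 : Fin N → ℂ)
                + γ • (Pi.single i 1 : Fin N → ℂ) + γ • (Pi.single b 1 : Fin N → ℂ)
                + (-γ) • μ) (b, c) (k, l) •
              π μ (u (x + γ • (Pi.single j 1 : Fin N → ℂ) + γ • (Pi.single c 1 : Fin N → ℂ)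
                + γ • (Pi.single i 1 : Fin N → ℂ) + γ • (Pi.single b 1 : Fin N → ℂ)) (k, l)))) := by
    simp only [Rop, Lax1, Lax2, Lax, Tshift, Mop, Fintype.sum_prod_type, map_sum, Finset.smul_sum]
  have hR' : (∑ c, ∑ b, ∑ k, ∑ l, ∑ μ ∈ M,
        L (x + γ • (Pi.single j 1 : Fin N → ℂ)) j c
          (L (x + γ • (Pi.single j 1 : Fin N → ℂ) + γ • (Pi.single c 1 : Fin N → ℂ)
                + γ • (Pi.single i 1 : Fin N → ℂ)) i b
            (R (x + γ • (Pi.single j 1 : Fin N → ℂ) + γ • (Pi.single c 1 : Fin N → ℂ)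
                + γ • (Pi.single i 1 : Fin N → ℂ) + γ • (Pi.single b 1 : Fin N → ℂ)
                + (-γ) • μ) (b, c) (k, l) •
              π μ (u (x + γ • (Pi.single j 1 : Fin N → ℂ) + γ • (Pi.single c 1 : Fin N → ℂ)
                + γ • (Pi.single i 1 : Fin N → ℂ) + γ • (Pi.single b 1 : Fin N → ℂ)) (k, l)))))
      = ∑ c, ∑ b, ∑ k, ∑ l, ∑ μ ∈ M,
        L (y + (-γ) • (Pi.single i 1 : Fin N → ℂ)) j c
          (L (y + γ • (Pi.single c 1 : Fin N → ℂ)) i b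
            (R (y + (-γ) • μ) (b, c) (k, l) •
              π μ (u (y + γ • (Pi.single k 1 : Fin N → ℂ) + γ • (Pi.single l 1 : Fin N → ℂ)) (k, l)))) := by
    refine Finset.sum_congr rfl fun c _ => Finset.sum_congr rfl fun b _ =>
      Finset.sum_congr rfl fun k _ => Finset.sum_congr rfl fun l _ =>
      Finset.sum_congr rfl fun μ _ => ?_
    by_cases h : (Pi.single b 1 : Fin N → ℂ) + Pi.single c 1 = Pi.single k 1 + Pi.single l 1
    · have f4 : R (x + γ • (Pi.single j 1 : Fin N → ℂ) + γ • (Pi.single c 1 : Fin N → ℂ)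
            + γ • (Pi.single i 1 : Fin N → ℂ) + γ • (Pi.single b 1 : Fin N → ℂ)
            + (-γ) • μ) (b, c) (k, l) = R (y + (-γ) • μ) (b, c) (k, l) := by
        rw [show x + γ • (Pi.single j 1 : Fin N → ℂ) + γ • (Pi.single c 1 : Fin N → ℂ)
            + γ • (Pi.single i 1 : Fin N → ℂ) + γ • (Pi.single b 1 : Fin N → ℂ) + (-γ) • μ
            = (y + (-γ) • μ) + γ • ((Pi.single b 1 : Fin N → ℂ) + Pi.single c 1) from by
          rw [hy]; module]
        exact htr _ γ b c k l
      have f3 : x + γ • (Pi.single j 1 : Fin N → ℂ) + γ • (Pi.single c 1 : Fin N → ℂ)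
            + γ • (Pi.single i 1 : Fin N → ℂ) + γ • (Pi.single b 1 : Fin N → ℂ)
          = y + γ • (Pi.single k 1 : Fin N → ℂ) + γ • (Pi.single l 1 : Fin N → ℂ) := by
        rw [hy]; linear_combination (norm := module) γ • h
      have f2 : x + γ • (Pi.single j 1 : Fin N → ℂ) + γ • (Pi.single c 1 : Fin N → ℂ)
            + γ • (Pi.single i 1 : Fin N → ℂ) = y + γ • (Pi.single c 1 : Fin N → ℂ) := by
        rw [hy]; module
      have f1 : x + γ • (Pi.single j 1 : Fin N → ℂ) = y + (-γ) • (Pi.single i 1 : Fin N → ℂ) := by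
        rw [hy]; module
      rw [f4, f3, f2, f1]
    · rw [hzw _ b c k l h, hzw _ b c k l h, zero_smul, zero_smul, map_zero, map_zero,
        map_zero, map_zero]
  rw [hL, hL', hR, hR']
  refine ((reorderA N M _).trans (claim1 N γ R M π L
      (fun k l => u (y + γ • (Pi.single k 1 : Fin N → ℂ) + γ • (Pi.single l 1 : Fin N → ℂ)) (k, l))
      y i j).symm).trans ?_
  refine Eq.trans ?_ ((reorderB N M _).trans (claim2 N γ R M π L
      (fun k l => u (y + γ • (Pi.single k 1 : Fin N → ℂ) + γ • (Pi.single l 1 : Fin N → ℂ)) (k, l))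
      y i j).symm).symm
  simp only [hRLL y]
end
end

section
/- Tensor product of representations of the dynamical RLL algebra: let R: ℂ^N → End(ℂ^N⊗ℂ^N) satisfy the zero-weight and translation conditions (hypotheses (i),(ii)). Let W_A = ⊕_{μ∈M_A} W_{A,μ} and W_B = ⊕_{μ∈M_B} W_{B,μ} be finite-dimensional graded spaces, and let L̃^A: ℂ^N → M_N(End W_A) and L̃^B: ℂ^N → M_N(End W_B) be matrix-valued functions with L̃^A_{ab}(x)(W_{A,μ}) ⊆ W_{A,μ−δ_a+δ_b}, L̃^B_{ab}(x)(W_{B,μ}) ⊆ W_{B,μ−δ_a+δ_b}, each satisfying the RLL relation R_{12}(x+γh^{(q)}) L̃_1(x−γh^{(2)}) L̃_2(x+γh^{(1)}) = L̃_2(x−γh^{(1)}) L̃_1(x+γh^{(2)}) R_{12}(x−γh^{(q)}) on ℂ^N⊗ℂ^N⊗W (W = W_A resp. W_B). Define L̃^{AB}: ℂ^N → M_N(End(W_A⊗W_B)) by L̃^{AB}_{ij}(x) := Σ_{k=1}^N (Σ_{μ∈M_B} L̃^A_{ik}(x+γμ)⊗π^B_μ) ∘ (Σ_{ν∈M_A}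 π^A_ν⊗L̃^B_{kj}(x−γν)), where π^A_ν, π^B_μ are the grading projections. Then L̃^{AB} satisfies the same RLL relation on ℂ^N⊗ℂ^N⊗(W_A⊗W_B), with respect to the grading of W_A⊗W_B by total weight (W_A⊗W_B)_{ρ} = ⊕_{ν+μ=ρ} W_{A,ν}⊗W_{B,μ}. -/
/- STATEMENT 18: Tensor product of representations of the dynamical RLL
   algebra: if L̃^A and L̃^B are representations (on graded spaces W_A, W_B)
   of the RLL relation with a zero-weight, translation-invariant R-matrix,
   then L̃^{AB}_{ij}(x) = Σ_k L̃^A_{ik}(x+γh^B) L̃^B_{kj}(x−γν^A) is a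
   representation on W_A ⊗ W_B graded by total weight. -/

noncomputable section
open Matrix Complex TensorProduct
open scoped BigOperators

variable (N : ℕ) (γ : ℂ)
variable {W : Type} [AddCommGroup W] [Module ℂ W]

/-- the dynamical RLL relation
    R₁₂(x+γh^{(q)}) L̃₁(x−γh^{(2)}) L̃₂(x+γh^{(1)})
      = L̃₂(x−γh^{(1)}) L̃₁(x+γh^{(2)}) R₁₂(x−γh^{(q)}) -/
def RLLrel (R : (Fin N → ℂ) → Matrix (Fin N × Fin N) (Fin N × Fin N) ℂ)
    (M : Finset (Fin N → ℂ)) (π : (Fin N → ℂ) → Module.End ℂ W)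
    (L : (Fin N → ℂ) → Fin N → Fin N → Module.End ℂ W) : Prop :=
  ∀ x : Fin N → ℂ,
    Rq N R M π γ x * L1sh N L (-γ) x * L2sh N L γ x =
    L2sh N L (-γ) x * L1sh N L γ x * Rq N R M π (-γ) x

namespace RLLaux

variable {V1 V2 : Type} [AddCommGroup V1] [Module ℂ V1] [AddCommGroup V2] [Module ℂ V2]

lemma tp_map_zero_left (g : Module.End ℂ V2) :
    TensorProduct.map (0 : Module.End ℂ V1) g = 0 := by ext w v; simp
lemma tp_map_zero_right (f : Module.End ℂ V1) :
    TensorProduct.map f (0 : Module.End ℂ V2) = 0 := by ext w v; simp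
lemma tp_map_mul (f f' : Module.End ℂ V1) (g g' : Module.End ℂ V2) :
    TensorProduct.map f g * TensorProduct.map f' g'
      = TensorProduct.map (f ∘ₗ f') (g ∘ₗ g') := by
  rw [Module.End.mul_eq_comp, ← TensorProduct.map_comp]
lemma tp_map_sum_left {ι : Type*} (s : Finset ι) (f : ι → Module.End ℂ V1)
    (g : Module.End ℂ V2) :
    TensorProduct.map (∑ i ∈ s, f i) g = ∑ i ∈ s, TensorProduct.map (f i) g := by
  ext w v; simp [TensorProduct.sum_tmul]
lemma tp_map_sum_right {ι : Type*} (s : Finset ι) (f : Module.End ℂ V1)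
    (g : ι → Module.End ℂ V2) :
    TensorProduct.map f (∑ i ∈ s, g i) = ∑ i ∈ s, TensorProduct.map f (g i) := by
  ext w v; simp [TensorProduct.tmul_sum]
lemma tp_map_smul_left (c : ℂ) (f : Module.End ℂ V1) (g : Module.End ℂ V2) :
    TensorProduct.map (c • f) g = c • TensorProduct.map f g := by
  ext w v; simp [TensorProduct.smul_tmul']
lemma tp_map_smul_right (c : ℂ) (f : Module.End ℂ V1) (g : Module.End ℂ V2) :
    TensorProduct.map f (c • g) = c • TensorProduct.map f g := by
  ext w v; simp [TensorProduct.tmul_smul]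

lemma proj_comm {n : ℕ} {W' : Type} [AddCommGroup W'] [Module ℂ W']
    (M : Finset (Fin n → ℂ)) (π : (Fin n → ℂ) → Module.End ℂ W')
    (hidem : ∀ μ, π μ ∘ₗ π μ = π μ)
    (horth : ∀ μ ν, μ ≠ ν → π μ ∘ₗ π ν = 0)
    (hcompl : (∑ μ ∈ M, π μ) = LinearMap.id)
    (hsupp : ∀ μ ∉ M, π μ = 0)
    (L : Module.End ℂ W') (a b : Fin n)
    (hgr : ∀ μ, L ∘ₗ π μ =
      π (μ - (Pi.single a 1 : Fin n → ℂ) + Pi.single b 1) ∘ₗ L ∘ₗ π μ)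
    (ν : Fin n → ℂ) :
    π ν ∘ₗ L = L ∘ₗ π (ν + (Pi.single a 1 : Fin n → ℂ) - Pi.single b 1) := by
  simp only [← Module.End.mul_eq_comp] at hidem horth hgr ⊢
  have key : ∀ μ ∈ M, π ν * (L * π μ) =
      if μ = ν + (Pi.single a 1 : Fin n → ℂ) - Pi.single b 1 then L * π μ else 0 := by
    intro μ _
    by_cases h : μ = ν + (Pi.single a 1 : Fin n → ℂ) - Pi.single b 1
    · have h2 : μ - (Pi.single a 1 : Fin n → ℂ) + Pi.single b 1 = ν := by
        rw [h]; abel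
      have hgr' : L * π μ = π ν * (L * π μ) := by
        conv_lhs => rw [hgr μ, h2]
      rw [if_pos h]
      conv_lhs => rw [hgr']
      rw [← mul_assoc, hidem, ← hgr']
    · have h2 : ν ≠ μ - (Pi.single a 1 : Fin n → ℂ) + Pi.single b 1 := by
        intro hc; apply h; rw [hc]; abel
      rw [if_neg h]
      conv_lhs => rw [hgr μ]
      rw [← mul_assoc, horth _ _ h2, zero_mul]
  have expand : π ν * L = ∑ μ ∈ M, π ν * (L * π μ) := by
    conv_rhs => rw [← Finset.mul_sum, ← Finset.mul_sum, hcompl]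
    rw [show (LinearMap.id : Module.End ℂ W') = 1 from rfl, mul_one]
  rw [expand, Finset.sum_congr rfl key, Finset.sum_ite_eq' M _ (fun μ => L * π μ)]
  by_cases hm : ν + (Pi.single a 1 : Fin n → ℂ) - Pi.single b 1 ∈ M
  · rw [if_pos hm]
  · rw [if_neg hm, hsupp _ hm, mul_zero]

lemma shift_sum {n : ℕ} {α : Type*} [AddCommMonoid α] (M : Finset (Fin n → ℂ))
    (t : Fin n → ℂ) (F : (Fin n → ℂ) → α)
    (h1 : ∀ g ∉ M, F g = 0) (h2 : ∀ g, g - t ∉ M → F g = 0) :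
    ∑ g ∈ M, F (g + t) = ∑ g ∈ M, F g := by
  have himg : ∑ g ∈ M, F (g + t) = ∑ g ∈ M.image (· + t), F g := by
    rw [Finset.sum_image (by intro x _ y _ h; simpa using h)]
  have hmem : ∀ g, g ∈ M.image (· + t) ↔ g - t ∈ M := by
    intro g
    simp only [Finset.mem_image]
    constructor
    · rintro ⟨a, ha, rfl⟩; simpa using ha
    · intro h; exact ⟨g - t, h, by abel⟩
  have e1 : ∑ g ∈ (M.image (· + t)) ∩ M, F g = ∑ g ∈ M.image (· + t), F g :=
    Finset.sum_subset Finset.inter_subset_left (fun g hg hg2 =>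
      h1 g (fun hgM => hg2 (Finset.mem_inter.mpr ⟨hg, hgM⟩)))
  have e2 : ∑ g ∈ (M.image (· + t)) ∩ M, F g = ∑ g ∈ M, F g :=
    Finset.sum_subset Finset.inter_subset_right (fun g hg hg2 =>
      h2 g (fun hgM => hg2 (Finset.mem_inter.mpr ⟨(hmem g).mpr hgM, hg⟩)))
  rw [himg, ← e1, e2]

def slot1 (n : ℕ) {α : Type*} [Zero α] (F : Fin n → Fin n → Fin n → α) :
    Matrix (Fin n × Fin n) (Fin n × Fin n) α :=
  fun p r => if p.2 = r.2 then F r.2 p.1 r.1 else 0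

def slot2 (n : ℕ) {α : Type*} [Zero α] (F : Fin n → Fin n → Fin n → α) :
    Matrix (Fin n × Fin n) (Fin n × Fin n) α :=
  fun p r => if p.1 = r.1 then F r.1 p.2 r.2 else 0

variable {n : ℕ} {α : Type*} [NonUnitalNonAssocSemiring α]

lemma slot1_mul_slot1 (F G : Fin n → Fin n → Fin n → α) :
    slot1 n F * slot1 n G = slot1 n (fun c i j => ∑ k, F c i k * G c k j) := by
  ext p r
  rw [Matrix.mul_apply, Fintype.sum_prod_type]
  simp only [slot1, ite_mul, zero_mul, mul_ite, mul_zero]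
  rw [Finset.sum_comm]
  simp [Finset.sum_ite_eq', Finset.sum_ite_eq]

lemma slot2_mul_slot2 (F G : Fin n → Fin n → Fin n → α) :
    slot2 n F * slot2 n G = slot2 n (fun c i j => ∑ k, F c i k * G c k j) := by
  ext p r
  rw [Matrix.mul_apply, Fintype.sum_prod_type]
  simp only [slot2, ite_mul, zero_mul, mul_ite, mul_zero]
  simp [Finset.sum_ite_eq', Finset.sum_ite_eq]

lemma slot1_mul_slot2 (F G : Fin n → Fin n → Fin n → α) :
    slot1 n F * slot2 n G = fun p r => F p.2 p.1 r.1 * G r.1 p.2 r.2 := by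
  ext p r
  rw [Matrix.mul_apply, Fintype.sum_prod_type]
  simp only [slot1, slot2, ite_mul, zero_mul, mul_ite, mul_zero]
  simp [Finset.sum_ite_eq', Finset.sum_ite_eq]

lemma slot2_mul_slot1 (F G : Fin n → Fin n → Fin n → α) :
    slot2 n G * slot1 n F = fun p r => G p.1 p.2 r.2 * F r.2 p.1 r.1 := by
  ext p r
  rw [Matrix.mul_apply, Fintype.sum_prod_type]
  simp only [slot1, slot2, ite_mul, zero_mul, mul_ite, mul_zero]
  simp [Finset.sum_ite_eq', Finset.sum_ite_eq]

/-- lift over the second grading : entries Σ_μ (G μ) ⊗ π μ -/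
def liftB (n : ℕ) (MB : Finset (Fin n → ℂ)) (πB : (Fin n → ℂ) → Module.End ℂ V2)
    (G : (Fin n → ℂ) → Matrix (Fin n × Fin n) (Fin n × Fin n) (Module.End ℂ V1)) :
    Matrix (Fin n × Fin n) (Fin n × Fin n) (Module.End ℂ (V1 ⊗[ℂ] V2)) :=
  fun p r => ∑ μ ∈ MB, TensorProduct.map (G μ p r) (πB μ)

/-- lift over the first grading : entries Σ_ν π ν ⊗ (G ν) -/
def liftA (n : ℕ) (MA : Finset (Fin n → ℂ)) (πA : (Fin n → ℂ) → Module.End ℂ V1)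
    (G : (Fin n → ℂ) → Matrix (Fin n × Fin n) (Fin n × Fin n) (Module.End ℂ V2)) :
    Matrix (Fin n × Fin n) (Fin n × Fin n) (Module.End ℂ (V1 ⊗[ℂ] V2)) :=
  fun p r => ∑ ν ∈ MA, TensorProduct.map (πA ν) (G ν p r)

lemma liftB_mul (MB : Finset (Fin n → ℂ)) (πB : (Fin n → ℂ) → Module.End ℂ V2)
    (hidem : ∀ μ, πB μ ∘ₗ πB μ = πB μ)
    (horth : ∀ μ ν, μ ≠ ν → πB μ ∘ₗ πB ν = 0)
    (G G' : (Fin n → ℂ) → Matrix (Fin n × Fin n) (Fin n × Fin n) (Module.End ℂ V1)) :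
    liftB n MB πB G * liftB n MB πB G' = liftB n MB πB (fun μ => G μ * G' μ) := by
  funext p r
  rw [Matrix.mul_apply]
  unfold liftB
  have step : ∀ q, (∑ μ ∈ MB, TensorProduct.map (G μ p q) (πB μ)) *
      (∑ μ' ∈ MB, TensorProduct.map (G' μ' q r) (πB μ')) =
      ∑ μ ∈ MB, TensorProduct.map (G μ p q ∘ₗ G' μ q r) (πB μ) := by
    intro q
    rw [Finset.sum_mul]
    refine Finset.sum_congr rfl fun μ hμ => ?_
    rw [Finset.mul_sum]
    have term : ∀ μ' ∈ MB, TensorProduct.map (G μ p q) (πB μ) *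
        TensorProduct.map (G' μ' q r) (πB μ') =
        if μ' = μ then TensorProduct.map (G μ p q ∘ₗ G' μ q r) (πB μ) else 0 := by
      intro μ' _
      rw [tp_map_mul]
      by_cases h : μ' = μ
      · subst h; rw [if_pos rfl, hidem]
      · rw [if_neg h, horth _ _ (Ne.symm h), tp_map_zero_right]
    rw [Finset.sum_congr rfl term, Finset.sum_ite_eq' MB μ]
    rw [if_pos hμ]
  calc (∑ q, liftB n MB πB G p q * liftB n MB πB G' q r)
      = ∑ q : Fin n × Fin n, ∑ μ ∈ MB,
          TensorProduct.map (G μ p q ∘ₗ G' μ q r) (πB μ) :=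
        Finset.sum_congr rfl (fun q _ => step q)
    _ = ∑ μ ∈ MB, ∑ q : Fin n × Fin n,
          TensorProduct.map (G μ p q ∘ₗ G' μ q r) (πB μ) := Finset.sum_comm
    _ = ∑ μ ∈ MB, TensorProduct.map ((G μ * G' μ) p r) (πB μ) := by
        refine Finset.sum_congr rfl fun μ _ => ?_
        rw [← tp_map_sum_left, Matrix.mul_apply]
        simp only [Module.End.mul_eq_comp]

lemma liftA_mul (MA : Finset (Fin n → ℂ)) (πA : (Fin n → ℂ) → Module.End ℂ V1)
    (hidem : ∀ μ, πA μ ∘ₗ πA μ = πA μ)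
    (horth : ∀ μ ν, μ ≠ ν → πA μ ∘ₗ πA ν = 0)
    (G G' : (Fin n → ℂ) → Matrix (Fin n × Fin n) (Fin n × Fin n) (Module.End ℂ V2)) :
    liftA n MA πA G * liftA n MA πA G' = liftA n MA πA (fun ν => G ν * G' ν) := by
  funext p r
  rw [Matrix.mul_apply]
  unfold liftA
  have step : ∀ q, (∑ ν ∈ MA, TensorProduct.map (πA ν) (G ν p q)) *
      (∑ ν' ∈ MA, TensorProduct.map (πA ν') (G' ν' q r)) =
      ∑ ν ∈ MA, TensorProduct.map (πA ν) (G ν p q ∘ₗ G' ν q r) := by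
    intro q
    rw [Finset.sum_mul]
    refine Finset.sum_congr rfl fun ν hν => ?_
    rw [Finset.mul_sum]
    have term : ∀ ν' ∈ MA, TensorProduct.map (πA ν) (G ν p q) *
        TensorProduct.map (πA ν') (G' ν' q r) =
        if ν' = ν then TensorProduct.map (πA ν) (G ν p q ∘ₗ G' ν q r) else 0 := by
      intro ν' _
      rw [tp_map_mul]
      by_cases h : ν' = ν
      · subst h; rw [if_pos rfl, hidem]
      · rw [if_neg h, horth _ _ (Ne.symm h), tp_map_zero_left]
    rw [Finset.sum_congr rfl term, Finset.sum_ite_eq' MA ν]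
    rw [if_pos hν]
  calc (∑ q, liftA n MA πA G p q * liftA n MA πA G' q r)
      = ∑ q : Fin n × Fin n, ∑ ν ∈ MA,
          TensorProduct.map (πA ν) (G ν p q ∘ₗ G' ν q r) :=
        Finset.sum_congr rfl (fun q _ => step q)
    _ = ∑ ν ∈ MA, ∑ q : Fin n × Fin n,
          TensorProduct.map (πA ν) (G ν p q ∘ₗ G' ν q r) := Finset.sum_comm
    _ = ∑ ν ∈ MA, TensorProduct.map (πA ν) ((G ν * G' ν) p r) := by
        refine Finset.sum_congr rfl fun ν _ => ?_
        rw [← tp_map_sum_right, Matrix.mul_apply]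
        simp only [Module.End.mul_eq_comp]

lemma chain {M : Type*} [Monoid M] {r rh r' a1 b1 a2 b2 a1' b1' a2' b2' : M}
    (h1 : b1 * a2 = a2 * b1) (h2 : r * a1 * a2 = a2' * a1' * rh)
    (h3 : rh * b1 * b2 = b2' * b1' * r') (h4 : a1' * b2' = b2' * a1') :
    r * (a1 * b1) * (a2 * b2) = a2' * b2' * (a1' * b1') * r' := by
  calc r * (a1 * b1) * (a2 * b2)
      = r * a1 * (b1 * a2) * b2 := by
        simp only [mul_assoc]
    _ = r * a1 * a2 * b1 * b2 := by rw [h1]; simp only [mul_assoc]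
    _ = a2' * a1' * rh * b1 * b2 := by rw [h2]
    _ = a2' * a1' * (rh * b1 * b2) := by simp only [mul_assoc]
    _ = a2' * a1' * (b2' * b1' * r') := by rw [h3]
    _ = a2' * (a1' * b2') * b1' * r' := by simp only [mul_assoc]
    _ = a2' * (b2' * a1') * b1' * r' := by rw [h4]
    _ = a2' * b2' * (a1' * b1') * r' := by simp only [mul_assoc]

end RLLaux

open RLLaux

set_option maxHeartbeats 1000000

theorem tensor_product_of_RLL_reps (hN : 2 ≤ N)
    {WA WB : Type} [AddCommGroup WA] [Module ℂ WA] [AddCommGroup WB] [Module ℂ WB]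
    (R : (Fin N → ℂ) → Matrix (Fin N × Fin N) (Fin N × Fin N) ℂ)
    -- zero-weight condition on R
    (hzw : ∀ x : Fin N → ℂ, ∀ i j k l : Fin N,
      (Pi.single i 1 : Fin N → ℂ) + Pi.single j 1 ≠
        (Pi.single k 1 : Fin N → ℂ) + Pi.single l 1 →
      R x (i, j) (k, l) = 0)
    -- translation condition on R
    (htr : ∀ x : Fin N → ℂ, ∀ t : ℂ, ∀ i j k l : Fin N,
      R (x + t • ((Pi.single i 1 : Fin N → ℂ) + Pi.single j 1)) (i, j) (k, l) =
        R x (i, j) (k, l))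
    -- the two graded spaces: weight sets and grading projections
    (MA : Finset (Fin N → ℂ)) (πA : (Fin N → ℂ) → Module.End ℂ WA)
    (MB : Finset (Fin N → ℂ)) (πB : (Fin N → ℂ) → Module.End ℂ WB)
    (hidemA : ∀ μ, πA μ ∘ₗ πA μ = πA μ)
    (horthA : ∀ μ ν, μ ≠ ν → πA μ ∘ₗ πA ν = 0)
    (hcomplA : (∑ μ ∈ MA, πA μ) = LinearMap.id)
    (hsuppA : ∀ μ ∉ MA, πA μ = 0)
    (hidemB : ∀ μ, πB μ ∘ₗ πB μ = πB μ)
    (horthB : ∀ μ ν, μ ≠ ν → πB μ ∘ₗ πB ν = 0)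
    (hcomplB : (∑ μ ∈ MB, πB μ) = LinearMap.id)
    (hsuppB : ∀ μ ∉ MB, πB μ = 0)
    (LA : (Fin N → ℂ) → Fin N → Fin N → Module.End ℂ WA)
    (LB : (Fin N → ℂ) → Fin N → Fin N → Module.End ℂ WB)
    -- grading conditions L̃_{ab}(x)(W_μ) ⊆ W_{μ−δ_a+δ_b}
    (hgrA : ∀ x a b μ, LA x a b ∘ₗ πA μ =
      πA (μ - (Pi.single a 1 : Fin N → ℂ) + Pi.single b 1) ∘ₗ LA x a b ∘ₗ πA μ)
    (hgrB : ∀ x a b μ, LB x a b ∘ₗ πB μ =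
      πB (μ - (Pi.single a 1 : Fin N → ℂ) + Pi.single b 1) ∘ₗ LB x a b ∘ₗ πB μ)
    -- the two RLL relations
    (hA : RLLrel N γ R MA πA LA) (hB : RLLrel N γ R MB πB LB) :
    -- conclusion: the tensor product representation satisfies the RLL relation
    -- on W_A ⊗ W_B with the total-weight grading
    RLLrel N γ R
      (Finset.image₂ (· + ·) MA MB)
      (fun ρ => ∑ ν ∈ MA, ∑ μ ∈ MB,
        if ν + μ = ρ then TensorProduct.map (πA ν) (πB μ) else 0)
      (fun x i j => ∑ k : Fin N,
        (∑ μ ∈ MB, TensorProduct.map (LA (x + γ • μ) i k) (πB μ)) ∘ₗ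
          (∑ ν ∈ MA, TensorProduct.map (πA ν) (LB (x - γ • ν) k j))) := by
  intro x
  -- commutation of projections past L, from the grading hypotheses
  have commA : ∀ (y : Fin N → ℂ) (a b : Fin N) (ν : Fin N → ℂ),
      πA ν ∘ₗ LA y a b =
        LA y a b ∘ₗ πA (ν + (Pi.single a 1 : Fin N → ℂ) - Pi.single b 1) :=
    fun y a b ν => proj_comm MA πA hidemA horthA hcomplA hsuppA (LA y a b) a b
      (fun μ => hgrA y a b μ) ν
  have commB : ∀ (y : Fin N → ℂ) (e f : Fin N) (μ : Fin N → ℂ),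
      πB μ ∘ₗ LB y e f =
        LB y e f ∘ₗ πB (μ + (Pi.single e 1 : Fin N → ℂ) - Pi.single f 1) :=
    fun y e f μ => proj_comm MB πB hidemB horthB hcomplB hsuppB (LB y e f) e f
      (fun μ => hgrB y e f μ) μ
  -- the core exchange identity
  have core : ∀ (a b e f : Fin N) (c d : Fin N → ℂ),
      (∑ ν ∈ MA, TensorProduct.map (πA ν) (LB (x - γ • ν - γ • d) e f)) *
        (∑ μ ∈ MB, TensorProduct.map (LA (x + γ • μ + γ • c) a b) (πB μ)) =
      (∑ μ ∈ MB, TensorProduct.map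
          (LA (x + γ • μ + γ • (c + (Pi.single e 1 : Fin N → ℂ) - Pi.single f 1)) a b)
          (πB μ)) *
        (∑ ν ∈ MA, TensorProduct.map (πA ν)
          (LB (x - γ • ν - γ • (d - (Pi.single a 1 : Fin N → ℂ) + Pi.single b 1)) e f)) := by
    intro a b e f c d
    set c' : Fin N → ℂ := c + (Pi.single e 1 : Fin N → ℂ) - Pi.single f 1 with hc'
    set d' : Fin N → ℂ := d - (Pi.single a 1 : Fin N → ℂ) + Pi.single b 1 with hd'
    set K : (Fin N → ℂ) → (Fin N → ℂ) → Module.End ℂ (WA ⊗[ℂ] WB) :=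
      fun ν μ => TensorProduct.map (LA (x + γ • μ + γ • c) a b ∘ₗ πA ν)
        (LB (x - γ • ν - γ • d') e f ∘ₗ πB μ) with hK
    have hzA : ∀ ν, ν ∉ MA → ∀ μ, K ν μ = 0 := by
      intro ν hν μ
      simp only [hK]
      rw [hsuppA ν hν, LinearMap.comp_zero, tp_map_zero_left]
    have hzA2 : ∀ ν, ν - ((Pi.single a 1 : Fin N → ℂ) - Pi.single b 1) ∉ MA →
        ∀ μ, K ν μ = 0 := by
      intro ν hν μ
      have hν' : ν - (Pi.single a 1 : Fin N → ℂ) + Pi.single b 1 ∉ MA := by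
        have he : ν - ((Pi.single a 1 : Fin N → ℂ) - Pi.single b 1) =
            ν - (Pi.single a 1 : Fin N → ℂ) + Pi.single b 1 := by abel
        rwa [he] at hν
      simp only [hK]
      rw [hgrA _ a b ν, hsuppA _ hν', LinearMap.zero_comp, tp_map_zero_left]
    have hzB : ∀ μ, μ ∉ MB → ∀ ν, K ν μ = 0 := by
      intro μ hμ ν
      simp only [hK]
      rw [hsuppB μ hμ, LinearMap.comp_zero, tp_map_zero_right]
    have hzB2 : ∀ μ, μ - ((Pi.single e 1 : Fin N → ℂ) - Pi.single f 1) ∉ MB →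
        ∀ ν, K ν μ = 0 := by
      intro μ hμ ν
      have hμ' : μ - (Pi.single e 1 : Fin N → ℂ) + Pi.single f 1 ∉ MB := by
        have he : μ - ((Pi.single e 1 : Fin N → ℂ) - Pi.single f 1) =
            μ - (Pi.single e 1 : Fin N → ℂ) + Pi.single f 1 := by abel
        rwa [he] at hμ
      simp only [hK]
      rw [hgrB _ e f μ, hsuppB _ hμ', LinearMap.zero_comp, tp_map_zero_right]
    have lhs_eq : (∑ ν ∈ MA, TensorProduct.map (πA ν) (LB (x - γ • ν - γ • d) e f)) *
        (∑ μ ∈ MB, TensorProduct.map (LA (x + γ • μ + γ • c) a b) (πB μ)) =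
        ∑ ν ∈ MA, ∑ μ ∈ MB,
          K (ν + ((Pi.single a 1 : Fin N → ℂ) - Pi.single b 1)) μ := by
      rw [Finset.sum_mul]
      refine Finset.sum_congr rfl fun ν _ => ?_
      rw [Finset.mul_sum]
      refine Finset.sum_congr rfl fun μ _ => ?_
      have harg : x - γ • ν - γ • d =
          x - γ • (ν + ((Pi.single a 1 : Fin N → ℂ) - Pi.single b 1)) - γ • d' := by
        rw [hd']
        simp only [smul_add, smul_sub]
        abel
      simp only [hK]
      rw [tp_map_mul, commA (x + γ • μ + γ • c) a b ν, add_sub_assoc, harg]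
    have lhs2 : ∑ ν ∈ MA, ∑ μ ∈ MB,
        K (ν + ((Pi.single a 1 : Fin N → ℂ) - Pi.single b 1)) μ =
        ∑ ν ∈ MA, ∑ μ ∈ MB, K ν μ :=
      shift_sum MA _ (fun ν => ∑ μ ∈ MB, K ν μ)
        (fun ν hν => Finset.sum_eq_zero fun μ _ => hzA ν hν μ)
        (fun ν hν => Finset.sum_eq_zero fun μ _ => hzA2 ν hν μ)
    have rhs_eq : (∑ μ ∈ MB, TensorProduct.map (LA (x + γ • μ + γ • c') a b) (πB μ)) *
        (∑ ν ∈ MA, TensorProduct.map (πA ν) (LB (x - γ • ν - γ • d') e f)) =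
        ∑ μ ∈ MB, ∑ ν ∈ MA,
          K ν (μ + ((Pi.single e 1 : Fin N → ℂ) - Pi.single f 1)) := by
      rw [Finset.sum_mul]
      refine Finset.sum_congr rfl fun μ _ => ?_
      rw [Finset.mul_sum]
      refine Finset.sum_congr rfl fun ν _ => ?_
      have harg : x + γ • μ + γ • c' =
          x + γ • (μ + ((Pi.single e 1 : Fin N → ℂ) - Pi.single f 1)) + γ • c := by
        rw [hc']
        simp only [smul_add, smul_sub]
        abel
      simp only [hK]
      rw [tp_map_mul, commB (x - γ • ν - γ • d') e f μ, add_sub_assoc, harg]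
    have rhs2 : ∑ μ ∈ MB, ∑ ν ∈ MA,
        K ν (μ + ((Pi.single e 1 : Fin N → ℂ) - Pi.single f 1)) =
        ∑ μ ∈ MB, ∑ ν ∈ MA, K ν μ :=
      shift_sum MB _ (fun μ => ∑ ν ∈ MA, K ν μ)
        (fun μ hμ => Finset.sum_eq_zero fun ν _ => hzB μ hμ ν)
        (fun μ hμ => Finset.sum_eq_zero fun ν _ => hzB2 μ hμ ν)
    rw [lhs_eq, lhs2, rhs_eq, rhs2]
    exact Finset.sum_comm
  -- slot representations of the lifted matrices
  have repA1 : ∀ s : ℂ, liftB N MB πB (fun μ => L1sh N LA s (x + γ • μ)) =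
      slot1 N (fun c i j => ∑ μ ∈ MB, TensorProduct.map
        (LA (x + γ • μ + s • (Pi.single c 1 : Fin N → ℂ)) i j) (πB μ)) := by
    intro s; funext p r
    simp only [liftB, slot1, L1sh]
    by_cases h : p.2 = r.2
    · simp only [if_pos h]
    · simp only [if_neg h, tp_map_zero_left, Finset.sum_const_zero]
  have repA2 : ∀ s : ℂ, liftB N MB πB (fun μ => L2sh N LA s (x + γ • μ)) =
      slot2 N (fun c i j => ∑ μ ∈ MB, TensorProduct.map
        (LA (x + γ • μ + s • (Pi.single c 1 : Fin N → ℂ)) i j) (πB μ)) := by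
    intro s; funext p r
    simp only [liftB, slot2, L2sh]
    by_cases h : p.1 = r.1
    · simp only [if_pos h]
    · simp only [if_neg h, tp_map_zero_left, Finset.sum_const_zero]
  have repB1 : ∀ s : ℂ, liftA N MA πA (fun ν => L1sh N LB s (x - γ • ν)) =
      slot1 N (fun c i j => ∑ ν ∈ MA, TensorProduct.map (πA ν)
        (LB (x - γ • ν + s • (Pi.single c 1 : Fin N → ℂ)) i j)) := by
    intro s; funext p r
    simp only [liftA, slot1, L1sh]
    by_cases h : p.2 = r.2
    · simp only [if_pos h]
    · simp only [if_neg h, tp_map_zero_right, Finset.sum_const_zero]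
  have repB2 : ∀ s : ℂ, liftA N MA πA (fun ν => L2sh N LB s (x - γ • ν)) =
      slot2 N (fun c i j => ∑ ν ∈ MA, TensorProduct.map (πA ν)
        (LB (x - γ • ν + s • (Pi.single c 1 : Fin N → ℂ)) i j)) := by
    intro s; funext p r
    simp only [liftA, slot2, L2sh]
    by_cases h : p.1 = r.1
    · simp only [if_pos h]
    · simp only [if_neg h, tp_map_zero_right, Finset.sum_const_zero]
  -- the two commutation lemmas
  have comm1 : liftA N MA πA (fun ν => L1sh N LB (-γ) (x - γ • ν)) *
      liftB N MB πB (fun μ => L2sh N LA γ (x + γ • μ)) =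
      liftB N MB πB (fun μ => L2sh N LA γ (x + γ • μ)) *
      liftA N MA πA (fun ν => L1sh N LB (-γ) (x - γ • ν)) := by
    rw [repB1 (-γ), repA2 γ, slot1_mul_slot2, slot2_mul_slot1]
    funext p r
    simp only [neg_smul, ← sub_eq_add_neg]
    have h := core p.2 r.2 p.1 r.1 (Pi.single r.1 1) (Pi.single p.2 1)
    rw [show (Pi.single r.1 1 : Fin N → ℂ) + Pi.single p.1 1 - Pi.single r.1 1 =
          Pi.single p.1 1 by abel,
        show (Pi.single p.2 1 : Fin N → ℂ) - Pi.single p.2 1 + Pi.single r.2 1 =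
          Pi.single r.2 1 by abel] at h
    exact h
  have comm2 : liftA N MA πA (fun ν => L2sh N LB (-γ) (x - γ • ν)) *
      liftB N MB πB (fun μ => L1sh N LA γ (x + γ • μ)) =
      liftB N MB πB (fun μ => L1sh N LA γ (x + γ • μ)) *
      liftA N MA πA (fun ν => L2sh N LB (-γ) (x - γ • ν)) := by
    rw [repB2 (-γ), repA1 γ, slot2_mul_slot1, slot1_mul_slot2]
    funext p r
    simp only [neg_smul, ← sub_eq_add_neg]
    have h := core p.1 r.1 p.2 r.2 (Pi.single r.2 1) (Pi.single p.1 1)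
    rw [show (Pi.single r.2 1 : Fin N → ℂ) + Pi.single p.2 1 - Pi.single r.2 1 =
          Pi.single p.2 1 by abel,
        show (Pi.single p.1 1 : Fin N → ℂ) - Pi.single p.1 1 + Pi.single r.1 1 =
          Pi.single r.1 1 by abel] at h
    exact h
  -- factorization of the tensor-product L operators
  have hF1 : ∀ s : ℂ, L1sh N (fun x i j => ∑ k : Fin N,
        (∑ μ ∈ MB, TensorProduct.map (LA (x + γ • μ) i k) (πB μ)) ∘ₗ
          (∑ ν ∈ MA, TensorProduct.map (πA ν) (LB (x - γ • ν) k j))) s x =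
      liftB N MB πB (fun μ => L1sh N LA s (x + γ • μ)) *
      liftA N MA πA (fun ν => L1sh N LB s (x - γ • ν)) := by
    intro s
    rw [repA1 s, repB1 s, slot1_mul_slot1]
    funext p r
    simp only [L1sh, slot1]
    by_cases h : p.2 = r.2
    · simp only [if_pos h]
      have e1 : ∀ μ : Fin N → ℂ, x + s • (Pi.single r.2 1 : Fin N → ℂ) + γ • μ =
          x + γ • μ + s • (Pi.single r.2 1 : Fin N → ℂ) := fun μ => add_right_comm _ _ _
      have e2 : ∀ ν : Fin N → ℂ, x + s • (Pi.single r.2 1 : Fin N → ℂ) - γ • ν =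
          x - γ • ν + s • (Pi.single r.2 1 : Fin N → ℂ) := fun ν => by abel
      simp only [e1, e2, Module.End.mul_eq_comp]
    · simp only [if_neg h]
  have hF2 : ∀ s : ℂ, L2sh N (fun x i j => ∑ k : Fin N,
        (∑ μ ∈ MB, TensorProduct.map (LA (x + γ • μ) i k) (πB μ)) ∘ₗ
          (∑ ν ∈ MA, TensorProduct.map (πA ν) (LB (x - γ • ν) k j))) s x =
      liftB N MB πB (fun μ => L2sh N LA s (x + γ • μ)) *
      liftA N MA πA (fun ν => L2sh N LB s (x - γ • ν)) := by
    intro s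
    rw [repA2 s, repB2 s, slot2_mul_slot2]
    funext p r
    simp only [L2sh, slot2]
    by_cases h : p.1 = r.1
    · simp only [if_pos h]
      have e1 : ∀ μ : Fin N → ℂ, x + s • (Pi.single r.1 1 : Fin N → ℂ) + γ • μ =
          x + γ • μ + s • (Pi.single r.1 1 : Fin N → ℂ) := fun μ => add_right_comm _ _ _
      have e2 : ∀ ν : Fin N → ℂ, x + s • (Pi.single r.1 1 : Fin N → ℂ) - γ • ν =
          x - γ • ν + s • (Pi.single r.1 1 : Fin N → ℂ) := fun ν => by abel
      simp only [e1, e2, Module.End.mul_eq_comp]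
    · simp only [if_neg h]
  -- representation of the R-matrix with the total grading as a lift
  have repRqB : ∀ s : ℂ, Rq N R (Finset.image₂ (· + ·) MA MB)
      (fun ρ => ∑ ν ∈ MA, ∑ μ ∈ MB,
        if ν + μ = ρ then TensorProduct.map (πA ν) (πB μ) else 0) s x =
      liftB N MB πB (fun μ => Rq N R MA πA s (x + s • μ)) := by
    intro s
    funext p r
    simp only [Rq, liftB]
    calc ∑ ρ ∈ Finset.image₂ (· + ·) MA MB, R (x + s • ρ) p r •
          ∑ ν ∈ MA, ∑ μ ∈ MB, (if ν + μ = ρ then TensorProduct.map (πA ν) (πB μ) else 0)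
        = ∑ ρ ∈ Finset.image₂ (· + ·) MA MB, ∑ ν ∈ MA, ∑ μ ∈ MB,
            (if ν + μ = ρ then R (x + s • ρ) p r • TensorProduct.map (πA ν) (πB μ) else 0) := by
          refine Finset.sum_congr rfl fun ρ _ => ?_
          rw [Finset.smul_sum]
          refine Finset.sum_congr rfl fun ν _ => ?_
          rw [Finset.smul_sum]
          refine Finset.sum_congr rfl fun μ _ => ?_
          rw [smul_ite, smul_zero]
      _ = ∑ ν ∈ MA, ∑ ρ ∈ Finset.image₂ (· + ·) MA MB, ∑ μ ∈ MB,
            (if ν + μ = ρ then R (x + s • ρ) p r • TensorProduct.map (πA ν) (πB μ) else 0) :=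
          Finset.sum_comm
      _ = ∑ ν ∈ MA, ∑ μ ∈ MB, ∑ ρ ∈ Finset.image₂ (· + ·) MA MB,
            (if ν + μ = ρ then R (x + s • ρ) p r • TensorProduct.map (πA ν) (πB μ) else 0) :=
          Finset.sum_congr rfl fun ν _ => Finset.sum_comm
      _ = ∑ ν ∈ MA, ∑ μ ∈ MB,
            R (x + s • (ν + μ)) p r • TensorProduct.map (πA ν) (πB μ) := by
          refine Finset.sum_congr rfl fun ν hν => ?_
          refine Finset.sum_congr rfl fun μ hμ => ?_
          rw [Finset.sum_ite_eq (Finset.image₂ (· + ·) MA MB) (ν + μ)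
            (fun ρ => R (x + s • ρ) p r • TensorProduct.map (πA ν) (πB μ)),
            if_pos (Finset.mem_image₂_of_mem hν hμ)]
      _ = ∑ ν ∈ MA, ∑ μ ∈ MB,
            R (x + s • μ + s • ν) p r • TensorProduct.map (πA ν) (πB μ) := by
          refine Finset.sum_congr rfl fun ν _ => Finset.sum_congr rfl fun μ _ => ?_
          have e : x + s • (ν + μ) = x + s • μ + s • ν := by
            rw [smul_add]; abel
          rw [e]
      _ = ∑ μ ∈ MB, ∑ ν ∈ MA,
            R (x + s • μ + s • ν) p r • TensorProduct.map (πA ν) (πB μ) :=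
          Finset.sum_comm
      _ = ∑ μ ∈ MB, TensorProduct.map
            (∑ ν ∈ MA, R (x + s • μ + s • ν) p r • πA ν) (πB μ) := by
          refine Finset.sum_congr rfl fun μ _ => ?_
          rw [tp_map_sum_left]
          refine Finset.sum_congr rfl fun ν _ => ?_
          rw [tp_map_smul_left]
  have repRqA : Rq N R (Finset.image₂ (· + ·) MA MB)
      (fun ρ => ∑ ν ∈ MA, ∑ μ ∈ MB,
        if ν + μ = ρ then TensorProduct.map (πA ν) (πB μ) else 0) (-γ) x =
      liftA N MA πA (fun ν => Rq N R MB πB (-γ) (x - γ • ν)) := by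
    funext p r
    simp only [Rq, liftA]
    calc ∑ ρ ∈ Finset.image₂ (· + ·) MA MB, R (x + (-γ) • ρ) p r •
          ∑ ν ∈ MA, ∑ μ ∈ MB, (if ν + μ = ρ then TensorProduct.map (πA ν) (πB μ) else 0)
        = ∑ ρ ∈ Finset.image₂ (· + ·) MA MB, ∑ ν ∈ MA, ∑ μ ∈ MB,
            (if ν + μ = ρ then R (x + (-γ) • ρ) p r • TensorProduct.map (πA ν) (πB μ) else 0) := by
          refine Finset.sum_congr rfl fun ρ _ => ?_
          rw [Finset.smul_sum]
          refine Finset.sum_congr rfl fun ν _ => ?_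
          rw [Finset.smul_sum]
          refine Finset.sum_congr rfl fun μ _ => ?_
          rw [smul_ite, smul_zero]
      _ = ∑ ν ∈ MA, ∑ μ ∈ MB, ∑ ρ ∈ Finset.image₂ (· + ·) MA MB,
            (if ν + μ = ρ then R (x + (-γ) • ρ) p r • TensorProduct.map (πA ν) (πB μ) else 0) :=
          (Finset.sum_comm).trans (Finset.sum_congr rfl fun ν _ => Finset.sum_comm)
      _ = ∑ ν ∈ MA, ∑ μ ∈ MB,
            R (x + (-γ) • (ν + μ)) p r • TensorProduct.map (πA ν) (πB μ) := by
          refine Finset.sum_congr rfl fun ν hν => ?_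
          refine Finset.sum_congr rfl fun μ hμ => ?_
          rw [Finset.sum_ite_eq (Finset.image₂ (· + ·) MA MB) (ν + μ)
            (fun ρ => R (x + (-γ) • ρ) p r • TensorProduct.map (πA ν) (πB μ)),
            if_pos (Finset.mem_image₂_of_mem hν hμ)]
      _ = ∑ ν ∈ MA, ∑ μ ∈ MB,
            R (x - γ • ν + (-γ) • μ) p r • TensorProduct.map (πA ν) (πB μ) := by
          refine Finset.sum_congr rfl fun ν _ => Finset.sum_congr rfl fun μ _ => ?_
          have e : x + (-γ) • (ν + μ) = x - γ • ν + (-γ) • μ := by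
            simp only [smul_add, neg_smul, ← sub_eq_add_neg]
            abel
          rw [e]
      _ = ∑ ν ∈ MA, TensorProduct.map (πA ν)
            (∑ μ ∈ MB, R (x - γ • ν + (-γ) • μ) p r • πB μ) := by
          refine Finset.sum_congr rfl fun ν _ => ?_
          rw [tp_map_sum_right]
          refine Finset.sum_congr rfl fun μ _ => ?_
          rw [tp_map_smul_right]
  -- the hat R-matrix, in its two lift forms
  have hswap : liftB N MB πB (fun μ => Rq N R MA πA (-γ) (x + γ • μ)) =
      liftA N MA πA (fun ν => Rq N R MB πB γ (x - γ • ν)) := by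
    funext p r
    simp only [Rq, liftB, liftA]
    calc ∑ μ ∈ MB, TensorProduct.map
          (∑ ν ∈ MA, R (x + γ • μ + (-γ) • ν) p r • πA ν) (πB μ)
        = ∑ μ ∈ MB, ∑ ν ∈ MA,
            R (x + γ • μ + (-γ) • ν) p r • TensorProduct.map (πA ν) (πB μ) := by
          refine Finset.sum_congr rfl fun μ _ => ?_
          rw [tp_map_sum_left]
          refine Finset.sum_congr rfl fun ν _ => ?_
          rw [tp_map_smul_left]
      _ = ∑ ν ∈ MA, ∑ μ ∈ MB,
            R (x + γ • μ + (-γ) • ν) p r • TensorProduct.map (πA ν) (πB μ) :=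
          Finset.sum_comm
      _ = ∑ ν ∈ MA, ∑ μ ∈ MB,
            R (x - γ • ν + γ • μ) p r • TensorProduct.map (πA ν) (πB μ) := by
          refine Finset.sum_congr rfl fun ν _ => Finset.sum_congr rfl fun μ _ => ?_
          have e : x + γ • μ + (-γ) • ν = x - γ • ν + γ • μ := by
            simp only [neg_smul, ← sub_eq_add_neg]
            abel
          rw [e]
      _ = ∑ ν ∈ MA, TensorProduct.map (πA ν)
            (∑ μ ∈ MB, R (x - γ • ν + γ • μ) p r • πB μ) := by
          refine Finset.sum_congr rfl fun ν _ => ?_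
          rw [tp_map_sum_right]
          refine Finset.sum_congr rfl fun μ _ => ?_
          rw [tp_map_smul_right]
  -- the lifted RLL relations
  have stepA : liftB N MB πB (fun μ => Rq N R MA πA γ (x + γ • μ)) *
      liftB N MB πB (fun μ => L1sh N LA (-γ) (x + γ • μ)) *
      liftB N MB πB (fun μ => L2sh N LA γ (x + γ • μ)) =
      liftB N MB πB (fun μ => L2sh N LA (-γ) (x + γ • μ)) *
      liftB N MB πB (fun μ => L1sh N LA γ (x + γ • μ)) *
      liftB N MB πB (fun μ => Rq N R MA πA (-γ) (x + γ • μ)) := by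
    rw [liftB_mul MB πB hidemB horthB, liftB_mul MB πB hidemB horthB,
      liftB_mul MB πB hidemB horthB, liftB_mul MB πB hidemB horthB]
    refine congrArg (liftB N MB πB) ?_
    funext μ
    exact hA (x + γ • μ)
  have stepB : liftA N MA πA (fun ν => Rq N R MB πB γ (x - γ • ν)) *
      liftA N MA πA (fun ν => L1sh N LB (-γ) (x - γ • ν)) *
      liftA N MA πA (fun ν => L2sh N LB γ (x - γ • ν)) =
      liftA N MA πA (fun ν => L2sh N LB (-γ) (x - γ • ν)) *
      liftA N MA πA (fun ν => L1sh N LB γ (x - γ • ν)) *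
      liftA N MA πA (fun ν => Rq N R MB πB (-γ) (x - γ • ν)) := by
    rw [liftA_mul MA πA hidemA horthA, liftA_mul MA πA hidemA horthA,
      liftA_mul MA πA hidemA horthA, liftA_mul MA πA hidemA horthA]
    refine congrArg (liftA N MA πA) ?_
    funext ν
    exact hB (x - γ • ν)
  -- assemble
  rw [hF1 (-γ), hF1 γ, hF2 γ, hF2 (-γ), repRqB γ, repRqA]
  exact chain comm1 stepA (by rw [hswap]; exact stepB) comm2.symm
end
end

section
/- Gauge equivalence of the quantum trigonometric Calogero–Moser (Macdonald-type) Hamiltonian: let γ ∈ ℂ with q = e^{−2γ}, and define difference operators acting on functions u: ℂ^N → ℂ by (H̃u)(x) := Σ_{i=1}^N [ Π_{j≠i} ((q² e^{y_{ij}} − q^{−2} e^{−y_{ij}})/(q e^{y_{ij}} − q^{−1} e^{−y_{ij}})) ] u(y) and (Hu)(x) := Σ_{i=1}^N [ Π_{j≠i} ((q e^{y_{ij}} − q^{−1} e^{−y_{ij}})(q^{−1} e^{y_{ij}} − q e^{−y_{ij}})/(e^{y_{ij}} − e^{−y_{ij}})²) ] u(y), where in the i-th summand y := x + 2γδ_i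 and y_{ij} = y_i − y_j. Let f(x) := Π_{k<l} (e^{x_{kl}} − e^{−x_{kl}}) / ((q e^{x_{kl}} − q^{−1} e^{−x_{kl}})(q^{−1} e^{x_{kl}} − q e^{−x_{kl}})). Then H = f · H̃ · f^{−1}: for every function u and every x at which all the factors above are defined and nonzero (i.e. x_{ij} ∉ iπℤ and x_{ij} ± 2γ ∉ iπℤ ∪ (iπℤ ± 2γ) for i≠j, so that all denominators and f-values involved are nonzero), one has f(x) · (H̃(u/f))(x) = (Hu)(x). -/
/- STATEMENT 19: Gauge equivalence of the quantum trigonometric Calogero–Moser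
   (Macdonald-type) Hamiltonian: H = f · H̃ · f⁻¹, i.e.
   f(x)·(H̃(u/f))(x) = (Hu)(x) at all admissible points x. -/

noncomputable section
open Complex
open scoped BigOperators

variable (N : ℕ) (γ : ℂ)

/-- q = e^{−2γ} -/
def qq : ℂ := Complex.exp (-2 * γ)

/-- the shifted point y = x + 2γδ_i -/
def ypt (x : Fin N → ℂ) (i : Fin N) : Fin N → ℂ :=
  x + (2 * γ) • (Pi.single i 1 : Fin N → ℂ)

/-- (H̃u)(x) = Σ_i Π_{j≠i} ((q²e^{y_{ij}} − q^{−2}e^{−y_{ij}})/(qe^{y_{ij}} − q^{−1}e^{−y_{ij}})) u(y),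
    with y = x + 2γδ_i -/
def Htil (u : (Fin N → ℂ) → ℂ) (x : Fin N → ℂ) : ℂ :=
  ∑ i : Fin N,
    (∏ j ∈ Finset.univ.erase i,
      ((qq γ)^2 * Complex.exp (ypt N γ x i i - ypt N γ x i j) -
        (qq γ)⁻¹^2 * Complex.exp (-(ypt N γ x i i - ypt N γ x i j))) /
      (qq γ * Complex.exp (ypt N γ x i i - ypt N γ x i j) -
        (qq γ)⁻¹ * Complex.exp (-(ypt N γ x i i - ypt N γ x i j)))) *
    u (ypt N γ x i)

/-- (Hu)(x) = Σ_i Π_{j≠i}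
    ((qe^{y_{ij}} − q^{−1}e^{−y_{ij}})(q^{−1}e^{y_{ij}} − qe^{−y_{ij}})/(e^{y_{ij}} − e^{−y_{ij}})²) u(y) -/
def Hop (u : (Fin N → ℂ) → ℂ) (x : Fin N → ℂ) : ℂ :=
  ∑ i : Fin N,
    (∏ j ∈ Finset.univ.erase i,
      (qq γ * Complex.exp (ypt N γ x i i - ypt N γ x i j) -
        (qq γ)⁻¹ * Complex.exp (-(ypt N γ x i i - ypt N γ x i j))) *
      ((qq γ)⁻¹ * Complex.exp (ypt N γ x i i - ypt N γ x i j) -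
        qq γ * Complex.exp (-(ypt N γ x i i - ypt N γ x i j))) /
      (Complex.exp (ypt N γ x i i - ypt N γ x i j) -
        Complex.exp (-(ypt N γ x i i - ypt N γ x i j)))^2) *
    u (ypt N γ x i)

/-- the gauge function
    f(x) = Π_{k<l} (e^{x_{kl}} − e^{−x_{kl}}) /
             ((qe^{x_{kl}} − q^{−1}e^{−x_{kl}})(q^{−1}e^{x_{kl}} − qe^{−x_{kl}})) -/
def fgauge (x : Fin N → ℂ) : ℂ :=
  ∏ k : Fin N, ∏ l : Fin N,
    if k < l then
      (Complex.exp (x k - x l) - Complex.exp (-(x k - x l))) /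
        ((qq γ * Complex.exp (x k - x l) - (qq γ)⁻¹ * Complex.exp (-(x k - x l))) *
          ((qq γ)⁻¹ * Complex.exp (x k - x l) - qq γ * Complex.exp (-(x k - x l))))
    else 1

/-! Since `e^w - e^{-w} = 2 sinh w`, every coefficient is a ratio of `sinh`s, and the gauge
function is `f x = ∏_{k<l} g (x_k - x_l)` with the odd function
`g z = sinh z / (2 sinh (z - 2γ) sinh (z + 2γ))`. Because `g` is odd, shifting `x_i` by `c`
multiplies `f` by `∏_{j≠i} g (x_i - x_j + c) / g (x_i - x_j)`, whatever the order of `i` and `j`.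
For the `i`-th summand (`c = 2γ`) the claim thus reduces, pair by pair, to the scalar identity
`g z · h̃ (z + 2γ) = h (z + 2γ) · g (z + 2γ)` between the coefficients `h̃` of `H̃` and `h` of `H`:
both sides equal `1 / (2 sinh (z + 2γ))`. -/

open Finset

section PairProd

lemma prod_prod_eq_prod_erase_mul {ι β : Type*} [Fintype ι] [DecidableEq ι] [CommMonoid β]
    (e : ι → ι → β) (i : ι) (hi : e i i = 1) :
    ∏ k, ∏ l, e k l =
      (∏ j ∈ univ.erase i, e i j * e j i) * ∏ k ∈ univ.erase i, ∏ l ∈ univ.erase i, e k l := by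
  simp_rw [← mul_prod_erase univ _ (mem_univ i), hi, one_mul, prod_mul_distrib]
  rw [mul_assoc]

variable {ι A M : Type*} [Fintype ι] [LinearOrder ι] [AddCommGroup A] [CommRing M]

def pairProd (g : A → M) (x : ι → A) : M :=
  ∏ k, ∏ l, if k < l then g (x k - x l) else 1

lemma pairProd_ne_zero [NoZeroDivisors M] [Nontrivial M] {g : A → M} {x : ι → A}
    (h : ∀ k l, k < l → g (x k - x l) ≠ 0) : pairProd g x ≠ 0 := by
  refine prod_ne_zero_iff.2 fun k _ => prod_ne_zero_iff.2 fun l _ => ?_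
  split_ifs with hkl
  exacts [h k l hkl, one_ne_zero]

lemma pairProd_add_single_mul {g : A → M} (hg : ∀ z, g (-z) = -g z) (x : ι → A) (i : ι) (c : A) :
    pairProd g (x + Pi.single i c) * ∏ j ∈ univ.erase i, g (x i - x j) =
      pairProd g x * ∏ j ∈ univ.erase i, g (x i - x j + c) := by
  set y : ι → A := x + Pi.single i c
  have hyj : ∀ j ∈ univ.erase i, y j = x j := fun j hj => by simp [y, ne_of_mem_erase hj]
  let cross (v : ι → A) (j : ι) : M :=
    (if i < j then g (v i - v j) else 1) * (if j < i then g (v j - v i) else 1)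
  have hsplit : ∀ v : ι → A, pairProd g v = (∏ j ∈ univ.erase i, cross v j) *
      ∏ k ∈ univ.erase i, ∏ l ∈ univ.erase i, if k < l then g (v k - v l) else 1 :=
    fun v => prod_prod_eq_prod_erase_mul _ i (by simp)
  have hrest : (∏ k ∈ univ.erase i, ∏ l ∈ univ.erase i, if k < l then g (y k - y l) else 1) =
      ∏ k ∈ univ.erase i, ∏ l ∈ univ.erase i, if k < l then g (x k - x l) else 1 :=
    prod_congr rfl fun k hk => prod_congr rfl fun l hl => by rw [hyj k hk, hyj l hl]
  have hcross : ∀ j ∈ univ.erase i, cross y j * g (x i - x j) = cross x j * g (x i - x j + c) := by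
    intro j hj
    have hyi : y i = x i + c := by simp [y]
    obtain hij | hji := lt_or_gt_of_ne (ne_of_mem_erase hj).symm
    · simp only [cross, if_pos hij, if_neg hij.not_gt, hyi, hyj j hj]
      rw [add_sub_right_comm]
      ring
    · simp only [cross, if_pos hji, if_neg hji.not_gt, hyi, hyj j hj]
      rw [show x j - (x i + c) = -(x i - x j + c) by abel, show x j - x i = -(x i - x j) by abel,
        hg, hg]
      ring
  have hprod : (∏ j ∈ univ.erase i, cross y j) * ∏ j ∈ univ.erase i, g (x i - x j) =
      (∏ j ∈ univ.erase i, cross x j) * ∏ j ∈ univ.erase i, g (x i - x j + c) := by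
    rw [← prod_mul_distrib, ← prod_mul_distrib]
    exact prod_congr rfl hcross
  rw [hsplit, hsplit, hrest]
  linear_combination (∏ k ∈ univ.erase i, ∏ l ∈ univ.erase i, if k < l then g (x k - x l) else 1) *
    hprod

lemma pairProd_add_single_ne_zero [NoZeroDivisors M] [Nontrivial M] {g : A → M}
    (hg : ∀ z, g (-z) = -g z) {x : ι → A} {i : ι} {c : A} (hx : pairProd g x ≠ 0)
    (h : ∀ j ∈ univ.erase i, g (x i - x j + c) ≠ 0) :
    pairProd g (x + Pi.single i c) ≠ 0 :=
  left_ne_zero_of_mul (by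
    rw [pairProd_add_single_mul hg]
    exact mul_ne_zero hx (prod_ne_zero_iff.2 h))

lemma pairProd_mul_prod_eq_prod_mul_pairProd [IsDomain M] {g : A → M} (hg : ∀ z, g (-z) = -g z)
    (a b : A → M) (x : ι → A) (i : ι) (c : A)
    (hg0 : ∀ j ∈ univ.erase i, g (x i - x j) ≠ 0)
    (hab : ∀ j ∈ univ.erase i,
      g (x i - x j) * a (x i - x j + c) = b (x i - x j + c) * g (x i - x j + c)) :
    pairProd g x * ∏ j ∈ univ.erase i, a (x i - x j + c) =
      (∏ j ∈ univ.erase i, b (x i - x j + c)) * pairProd g (x + Pi.single i c) := by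
  refine mul_right_cancel₀ (prod_ne_zero_iff.2 hg0) ?_
  calc pairProd g x * (∏ j ∈ univ.erase i, a (x i - x j + c)) *
        ∏ j ∈ univ.erase i, g (x i - x j)
      = pairProd g x * ∏ j ∈ univ.erase i, g (x i - x j) * a (x i - x j + c) := by
        rw [prod_mul_distrib]; ring
    _ = pairProd g x * ∏ j ∈ univ.erase i, b (x i - x j + c) * g (x i - x j + c) := by
        rw [prod_congr rfl hab]
    _ = (∏ j ∈ univ.erase i, b (x i - x j + c)) *
          (pairProd g x * ∏ j ∈ univ.erase i, g (x i - x j + c)) := by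
        rw [prod_mul_distrib]; ring
    _ = _ := by rw [← pairProd_add_single_mul hg]; ring

end PairProd

lemma sinh_ne_zero_of_not_inPiZ_s19 {w : ℂ} (h : ¬ inPiZ w) : sinh w ≠ 0 := by
  intro hw
  have hexp := two_sinh w
  rw [hw, mul_zero, eq_comm, sub_eq_zero, exp_eq_exp_iff_exists_int] at hexp
  obtain ⟨n, hn⟩ := hexp
  exact h ⟨n, by linear_combination hn / 2⟩

lemma exp_mul_exp_sub_exp_mul_exp (a w : ℂ) :
    exp a * exp w - exp (-a) * exp (-w) = 2 * sinh (w + a) := by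
  rw [two_sinh, ← exp_add, ← exp_add]
  ring_nf

lemma exp_neg_mul_exp_sub_exp_mul_exp (a w : ℂ) :
    exp (-a) * exp w - exp a * exp (-w) = 2 * sinh (w - a) := by
  simpa [sub_eq_add_neg] using exp_mul_exp_sub_exp_mul_exp (-a) w

lemma qq_eq_exp : qq γ = exp (-(2 * γ)) := by rw [qq, neg_mul]

lemma qq_inv_eq_exp : (qq γ)⁻¹ = exp (2 * γ) := by rw [qq_eq_exp, exp_neg, inv_inv]

lemma qq_sq_eq_exp : qq γ ^ 2 = exp (-(4 * γ)) := by
  rw [qq_eq_exp, ← exp_nat_mul]; ring_nf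

lemma qq_inv_sq_eq_exp : (qq γ)⁻¹ ^ 2 = exp (4 * γ) := by
  rw [qq_inv_eq_exp, ← exp_nat_mul]; ring_nf

def gaugeFactor (z : ℂ) : ℂ :=
  (exp z - exp (-z)) /
    ((qq γ * exp z - (qq γ)⁻¹ * exp (-z)) * ((qq γ)⁻¹ * exp z - qq γ * exp (-z)))

def htilCoeff (w : ℂ) : ℂ :=
  ((qq γ)^2 * exp w - (qq γ)⁻¹^2 * exp (-w)) / (qq γ * exp w - (qq γ)⁻¹ * exp (-w))

def hopCoeff (w : ℂ) : ℂ :=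
  (qq γ * exp w - (qq γ)⁻¹ * exp (-w)) * ((qq γ)⁻¹ * exp w - qq γ * exp (-w)) /
    (exp w - exp (-w))^2

lemma gaugeFactor_eq_sinh (z : ℂ) :
    gaugeFactor γ z = sinh z / (2 * (sinh (z - 2 * γ) * sinh (z + 2 * γ))) := by
  rw [gaugeFactor, qq_inv_eq_exp, qq_eq_exp, exp_neg_mul_exp_sub_exp_mul_exp,
    exp_mul_exp_sub_exp_mul_exp, ← two_sinh]
  ring

lemma htilCoeff_eq_sinh (w : ℂ) :
    htilCoeff γ w = sinh (w - 4 * γ) / sinh (w - 2 * γ) := by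
  rw [htilCoeff, qq_inv_sq_eq_exp, qq_sq_eq_exp, qq_inv_eq_exp, qq_eq_exp,
    exp_neg_mul_exp_sub_exp_mul_exp, exp_neg_mul_exp_sub_exp_mul_exp]
  exact mul_div_mul_left _ _ two_ne_zero

lemma hopCoeff_eq_sinh (w : ℂ) :
    hopCoeff γ w = sinh (w - 2 * γ) * sinh (w + 2 * γ) / sinh w ^ 2 := by
  rw [hopCoeff, qq_inv_eq_exp, qq_eq_exp, exp_neg_mul_exp_sub_exp_mul_exp,
    exp_mul_exp_sub_exp_mul_exp, ← two_sinh]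
  ring

lemma gaugeFactor_neg (z : ℂ) : gaugeFactor γ (-z) = -gaugeFactor γ z := by
  rw [gaugeFactor_eq_sinh, gaugeFactor_eq_sinh, show -z - 2 * γ = -(z + 2 * γ) by ring,
    show -z + 2 * γ = -(z - 2 * γ) by ring, sinh_neg, sinh_neg, sinh_neg]
  ring

lemma gaugeFactor_ne_zero {z : ℂ} (h : sinh z ≠ 0) (hsub : sinh (z - 2 * γ) ≠ 0)
    (hadd : sinh (z + 2 * γ) ≠ 0) : gaugeFactor γ z ≠ 0 := by
  rw [gaugeFactor_eq_sinh]
  exact div_ne_zero h (mul_ne_zero two_ne_zero (mul_ne_zero hsub hadd))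

lemma gaugeFactor_mul_htilCoeff {z : ℂ} (h : sinh z ≠ 0) (hsub : sinh (z - 2 * γ) ≠ 0)
    (hadd₂ : sinh (z + 4 * γ) ≠ 0) :
    gaugeFactor γ z * htilCoeff γ (z + 2 * γ) =
      hopCoeff γ (z + 2 * γ) * gaugeFactor γ (z + 2 * γ) := by
  rw [gaugeFactor_eq_sinh, gaugeFactor_eq_sinh, htilCoeff_eq_sinh, hopCoeff_eq_sinh,
    show z + 2 * γ - 4 * γ = z - 2 * γ by ring, add_sub_cancel_right,
    show z + 2 * γ + 2 * γ = z + 4 * γ by ring]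
  generalize sinh (z + 4 * γ) = s at hadd₂ ⊢
  field_simp

lemma pairProd_gaugeFactor_mul_prod_htilCoeff {ι : Type*} [Fintype ι] [LinearOrder ι]
    (x : ι → ℂ) (i : ι) (v : ℂ) (hf : pairProd (gaugeFactor γ) x ≠ 0)
    (hs : ∀ j ∈ univ.erase i, sinh (x i - x j) ≠ 0 ∧ sinh (x i - x j + 2 * γ) ≠ 0 ∧
      sinh (x i - x j - 2 * γ) ≠ 0 ∧ sinh (x i - x j + 4 * γ) ≠ 0) :
    pairProd (gaugeFactor γ) x * ((∏ j ∈ univ.erase i, htilCoeff γ (x i - x j + 2 * γ)) *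
      (v / pairProd (gaugeFactor γ) (x + Pi.single i (2 * γ)))) =
      (∏ j ∈ univ.erase i, hopCoeff γ (x i - x j + 2 * γ)) * v := by
  have hpair : ∀ j ∈ univ.erase i, gaugeFactor γ (x i - x j) ≠ 0 ∧
      gaugeFactor γ (x i - x j) * htilCoeff γ (x i - x j + 2 * γ) =
        hopCoeff γ (x i - x j + 2 * γ) * gaugeFactor γ (x i - x j + 2 * γ) ∧
      gaugeFactor γ (x i - x j + 2 * γ) ≠ 0 := by
    intro j hj
    obtain ⟨h, hadd, hsub, hadd₂⟩ := hs j hj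
    refine ⟨gaugeFactor_ne_zero γ h hsub hadd, gaugeFactor_mul_htilCoeff γ h hsub hadd₂,
      gaugeFactor_ne_zero γ hadd (by rwa [add_sub_cancel_right]) (by convert hadd₂ using 2; ring)⟩
  have hfy := pairProd_add_single_ne_zero (gaugeFactor_neg γ) hf fun j hj => (hpair j hj).2.2
  rw [← mul_assoc, pairProd_mul_prod_eq_prod_mul_pairProd (gaugeFactor_neg γ) _ _ x i (2 * γ)
    (fun j hj => (hpair j hj).1) (fun j hj => (hpair j hj).2.1)]
  field_simp

lemma fgauge_eq_pairProd : fgauge N γ = pairProd (gaugeFactor γ) := rfl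

lemma Htil_eq_sum (u : (Fin N → ℂ) → ℂ) (x : Fin N → ℂ) :
    Htil N γ u x = ∑ i, (∏ j ∈ univ.erase i, htilCoeff γ (ypt N γ x i i - ypt N γ x i j)) *
      u (ypt N γ x i) := rfl

lemma Hop_eq_sum (u : (Fin N → ℂ) → ℂ) (x : Fin N → ℂ) :
    Hop N γ u x = ∑ i, (∏ j ∈ univ.erase i, hopCoeff γ (ypt N γ x i i - ypt N γ x i j)) *
      u (ypt N γ x i) := rfl

lemma ypt_eq_add_single (x : Fin N → ℂ) (i : Fin N) : ypt N γ x i = x + Pi.single i (2 * γ) := by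
  rw [ypt, ← Pi.single_smul, smul_eq_mul, mul_one]

lemma prod_erase_ypt_sub (F : ℂ → ℂ) (x : Fin N → ℂ) (i : Fin N) :
    ∏ j ∈ univ.erase i, F (ypt N γ x i i - ypt N γ x i j) =
      ∏ j ∈ univ.erase i, F (x i - x j + 2 * γ) :=
  prod_congr rfl fun j hj => by
    simp [ypt_eq_add_single, ne_of_mem_erase hj, add_sub_right_comm]

theorem macdonald_hamiltonian_gauge_equivalence
    (u : (Fin N → ℂ) → ℂ) (x : Fin N → ℂ)
    (hx : ∀ i j : Fin N, i ≠ j →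
      ¬ inPiZ (x i - x j) ∧
      ¬ inPiZ (x i - x j + 2 * γ) ∧ ¬ inPiZ (x i - x j - 2 * γ) ∧
      ¬ inPiZ (x i - x j + 4 * γ) ∧ ¬ inPiZ (x i - x j - 4 * γ)) :
    fgauge N γ x * Htil N γ (fun y => u y / fgauge N γ y) x = Hop N γ u x := by
  have hsinh : ∀ i j : Fin N, i ≠ j →
      sinh (x i - x j) ≠ 0 ∧ sinh (x i - x j + 2 * γ) ≠ 0 ∧ sinh (x i - x j - 2 * γ) ≠ 0 ∧
        sinh (x i - x j + 4 * γ) ≠ 0 := by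
    intro i j hij
    obtain ⟨h, hadd, hsub, hadd₂, -⟩ := hx i j hij
    exact ⟨sinh_ne_zero_of_not_inPiZ_s19 h, sinh_ne_zero_of_not_inPiZ_s19 hadd,
      sinh_ne_zero_of_not_inPiZ_s19 hsub, sinh_ne_zero_of_not_inPiZ_s19 hadd₂⟩
  have hf : pairProd (gaugeFactor γ) x ≠ 0 := pairProd_ne_zero fun k l hkl => by
    obtain ⟨h, hadd, hsub, -⟩ := hsinh k l hkl.ne
    exact gaugeFactor_ne_zero γ h hsub hadd
  rw [Htil_eq_sum, Hop_eq_sum, mul_sum]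
  refine sum_congr rfl fun i _ => ?_
  rw [prod_erase_ypt_sub, prod_erase_ypt_sub, ypt_eq_add_single, fgauge_eq_pairProd]
  exact pairProd_gaugeFactor_mul_prod_htilCoeff γ x i _ hf
    fun j hj => hsinh i j (ne_of_mem_erase hj).symm
end
end
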